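/- arXiv:2310.13887 — 7 statements merged into one kernel-verified Lean document; each statement's English description precedes it below -/
import Mathlib

section
/- Let ξ₁ and ξ₂ be finitely atomic real charges (signed measures with finite support) on (0,∞) such that ξ₁*ξ₁ = ξ₂*ξ₂. Then ξ₁ = ξ₂ or ξ₁ = -ξ₂. -/
private def posInclusion : {x : ℝ // 0 < x} →* ℝ where
  toFun := Subtype.val
  map_one' := rfl
  map_mul' _ _ := rfl

private lemma lift_pos_support (ξ : MonoidAlgebra ℝ ℝ)
    (h : ∀ t ∈ ξ.coeff.support, (0 : ℝ) < t) :
    MonoidAlgebra.mapDomainRingHom ℝ posInclusion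
      (MonoidAlgebra.ofCoeff (Finsupp.subtypeDomain (fun x : ℝ => 0 < x) ξ.coeff) :
        MonoidAlgebra ℝ {x : ℝ // 0 < x}) = ξ := by
  ext t
  show Finsupp.mapDomain _ _ t = ξ.coeff t
  by_cases ht : 0 < t
  · have : t = posInclusion ⟨t, ht⟩ := rfl
    rw [this, Finsupp.mapDomain_apply (f := ⇑posInclusion) Subtype.val_injective]
    rfl
  · rw [Finsupp.mapDomain_notin_range]
    · by_contra hξ
      exact ht (h t (Finsupp.mem_support_iff.mpr fun h0 => hξ h0.symm))
    · rintro ⟨⟨x, hx⟩, rfl⟩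
      exact ht hx

/-- Square roots of finitely atomic charges on (0,∞) under multiplicative
convolution are unique up to sign. -/
theorem sqrt_unique_up_to_sign (ξ₁ ξ₂ : MonoidAlgebra ℝ ℝ)
    (h₁ : ∀ t ∈ ξ₁.coeff.support, (0 : ℝ) < t) (h₂ : ∀ t ∈ ξ₂.coeff.support, (0 : ℝ) < t)
    (h : ξ₁ * ξ₁ = ξ₂ * ξ₂) : ξ₁ = ξ₂ ∨ ξ₁ = -ξ₂ := by
  set Φ := MonoidAlgebra.mapDomainRingHom ℝ posInclusion with hΦ
  have hinj : Function.Injective Φ :=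
    MonoidAlgebra.mapDomain_injective Subtype.val_injective
  set a₁ : MonoidAlgebra ℝ {x : ℝ // 0 < x} :=
    MonoidAlgebra.ofCoeff (Finsupp.subtypeDomain (fun x : ℝ => 0 < x) ξ₁.coeff) with ha₁
  set a₂ : MonoidAlgebra ℝ {x : ℝ // 0 < x} :=
    MonoidAlgebra.ofCoeff (Finsupp.subtypeDomain (fun x : ℝ => 0 < x) ξ₂.coeff) with ha₂
  have e₁ : Φ a₁ = ξ₁ := lift_pos_support ξ₁ h₁
  have e₂ : Φ a₂ = ξ₂ := lift_pos_support ξ₂ h₂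
  have hsq : a₁ * a₁ = a₂ * a₂ := by
    apply hinj
    rw [map_mul, map_mul, e₁, e₂, h]
  rcases mul_self_eq_mul_self_iff.mp hsq with h' | h'
  · left; rw [← e₁, ← e₂, h']
  · right; rw [← e₁, ← e₂, h', map_neg]
end

section
/- There is no finitely atomic real charge ν supported in (0,∞) such that ν*ν is a positive measure whose support has exactly 4 elements. -/
open MeasureTheory MonoidAlgebra Finset

/-- The charge tν = Σ b_k λ_k δ_{λ_k}, i.e. multiplication of a finitely atomic
charge by the identity function t. -/
noncomputable def tCharge (ξ : MonoidAlgebra ℝ ℝ) : MonoidAlgebra ℝ ℝ :=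
  Finsupp.sum ξ.coeff fun x b => MonoidAlgebra.single x (x * b)

noncomputable def sqrtSeq (a β : ℝ) : ℕ → ℝ
  | 0 => a
  | n+1 => sqrtSeq a β n * ((1/2 - (n:ℝ)) * β / ((n:ℝ)+1))

lemma sqrtSeq_zero (a β : ℝ) : sqrtSeq a β 0 = a := rfl

lemma sqrtSeq_succ (a β : ℝ) (n : ℕ) :
    sqrtSeq a β (n+1) = sqrtSeq a β n * ((1/2 - (n:ℝ)) * β / ((n:ℝ)+1)) := rfl

lemma sqrtSeq_ne_zero {a β : ℝ} (ha : a ≠ 0) (hβ : β ≠ 0) : ∀ n, sqrtSeq a β n ≠ 0 := by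
  intro n
  induction n with
  | zero => exact ha
  | succ n ih =>
    rw [sqrtSeq_succ]
    apply mul_ne_zero ih
    apply div_ne_zero (mul_ne_zero ?_ hβ) (by positivity)
    intro h
    rcases n with _ | n
    · norm_num at h
    · have h1 : (1:ℝ) ≤ ((n:ℝ)+1) := by
        have := Nat.cast_nonneg (α := ℝ) n
        linarith
      push_cast at h
      linarith

-- half-sum lemma
lemma sqrtSeq_half (a β : ℝ) (m : ℕ) :
    (2:ℝ) * ∑ i ∈ range (m+1), (i:ℝ) * (sqrtSeq a β i * sqrtSeq a β (m-i)) =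
      (m:ℝ) * ∑ i ∈ range (m+1), sqrtSeq a β i * sqrtSeq a β (m-i) := by
  set u := sqrtSeq a β with hu
  have h2 : ∑ i ∈ range (m+1), (i:ℝ) * (u i * u (m-i)) =
      ∑ i ∈ range (m+1), ((m-i:ℕ):ℝ) * (u i * u (m-i)) := by
    conv_lhs => rw [← Finset.sum_range_reflect]
    apply sum_congr rfl
    intro j hj
    rw [mem_range] at hj
    have h1 : m + 1 - 1 - j = m - j := by omega
    have h2 : m - (m - j) = j := by omega
    rw [h1, h2]
    ring
  calc (2:ℝ) * ∑ i ∈ range (m+1), (i:ℝ) * (u i * u (m-i))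
      = (∑ i ∈ range (m+1), (i:ℝ) * (u i * u (m-i)))
        + ∑ i ∈ range (m+1), ((m-i:ℕ):ℝ) * (u i * u (m-i)) := by rw [← h2]; ring
    _ = ∑ i ∈ range (m+1), ((i:ℝ) + ((m-i:ℕ):ℝ)) * (u i * u (m-i)) := by
        rw [← Finset.sum_add_distrib]; apply sum_congr rfl; intro i _; ring
    _ = (m:ℝ) * ∑ i ∈ range (m+1), u i * u (m-i) := by
        rw [Finset.mul_sum]
        apply sum_congr rfl
        intro i hi
        rw [mem_range] at hi
        have : ((m-i:ℕ):ℝ) = (m:ℝ) - (i:ℝ) := by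
          rw [Nat.cast_sub (by omega)]
        rw [this]; ring

lemma sqrtSeq_rec (a β : ℝ) (n : ℕ) :
    ((n:ℝ)+1) * ∑ i ∈ range (n+2), sqrtSeq a β i * sqrtSeq a β (n+1-i) =
      (1-(n:ℝ)) * β * ∑ i ∈ range (n+1), sqrtSeq a β i * sqrtSeq a β (n-i) := by
  set u := sqrtSeq a β with hu
  have step1 : ((n:ℝ)+1) * ∑ i ∈ range (n+2), u i * u (n+1-i) =
      2 * ∑ i ∈ range (n+2), (i:ℝ) * (u i * u (n+1-i)) := by
    have := sqrtSeq_half a β (n+1)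
    push_cast at this ⊢
    linarith
  have step2 : ∑ i ∈ range (n+2), (i:ℝ) * (u i * u (n+1-i)) =
      ∑ i ∈ range (n+1), ((i:ℝ)+1) * (u (i+1) * u (n-i)) := by
    rw [Finset.sum_range_succ' (fun i => (i:ℝ) * (u i * u (n+1-i))) (n+1)]
    simp only [Nat.cast_zero, zero_mul, add_zero]
    apply sum_congr rfl
    intro i hi
    rw [mem_range] at hi
    have : n + 1 - (i+1) = n - i := by omega
    rw [this]
    push_cast
    ring
  have step3 : ∀ i : ℕ, ((i:ℝ)+1) * u (i+1) = u i * ((1/2 - (i:ℝ)) * β) := by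
    intro i
    rw [hu, sqrtSeq_succ]
    have hne : ((i:ℝ)+1) ≠ 0 := by positivity
    field_simp
  have step4 : ∑ i ∈ range (n+1), ((i:ℝ)+1) * (u (i+1) * u (n-i)) =
      ∑ i ∈ range (n+1), (β * (1/2 * (u i * u (n-i)) - (i:ℝ) * (u i * u (n-i)))) := by
    apply sum_congr rfl
    intro i _
    have h3 := step3 i
    calc ((i:ℝ)+1) * (u (i+1) * u (n-i)) = (((i:ℝ)+1) * u (i+1)) * u (n-i) := by ring
      _ = u i * ((1/2 - (i:ℝ)) * β) * u (n-i) := by rw [h3]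
      _ = β * (1/2 * (u i * u (n-i)) - (i:ℝ) * (u i * u (n-i))) := by ring
  have half_n := sqrtSeq_half a β n
  rw [← hu] at half_n
  set S := ∑ i ∈ range (n+1), u i * u (n-i) with hS
  set T := ∑ i ∈ range (n+1), (i:ℝ) * (u i * u (n-i)) with hT
  have hsum : ∑ i ∈ range (n+1), (β * (1/2 * (u i * u (n-i)) - (i:ℝ) * (u i * u (n-i))))
      = β * (1/2 * S - T) := by
    have h5 : 1/2 * S - T = ∑ i ∈ range (n+1),
        (1/2 * (u i * u (n-i)) - (i:ℝ) * (u i * u (n-i))) := by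
      rw [hS, hT, Finset.mul_sum, ← Finset.sum_sub_distrib]
    rw [h5, Finset.mul_sum]
  rw [step1, step2, step4, hsum]
  have hTS : T = (n:ℝ) * S / 2 := by linarith
  rw [hTS]
  ring

lemma sqrtSeq_conv (a β : ℝ) : ∀ n, 2 ≤ n →
    ∑ i ∈ range (n+1), sqrtSeq a β i * sqrtSeq a β (n-i) = 0 := by
  intro n hn
  induction n with
  | zero => omega
  | succ n ih =>
    rcases Nat.lt_or_ge n 2 with h2 | h2
    · -- n+1 = 2, i.e. n = 1
      have hn1 : n = 1 := by omega
      subst hn1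
      simp [Finset.sum_range_succ, sqrtSeq_succ, sqrtSeq]
      ring
    · have hV := ih h2
      have hrec := sqrtSeq_rec a β n
      rw [hV, mul_zero] at hrec
      have hpos : ((n:ℝ)+1) ≠ 0 := by positivity
      have := mul_eq_zero.mp hrec
      rcases this with h | h
      · exact absurd h hpos
      · exact h

set_option maxHeartbeats 2000000 in
/-- No finitely atomic real charge supported in (0,∞) has a multiplicative square
which is a positive measure with exactly 4 atoms. -/
theorem no_four_atomic_square :
    ¬ ∃ ν : MonoidAlgebra ℝ ℝ, (∀ t ∈ ν.coeff.support, (0 : ℝ) < t) ∧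
      (∀ t : ℝ, 0 ≤ (ν * ν).coeff t) ∧ (ν * ν).coeff.support.card = 4 := by
  rintro ⟨ν, hpos, hnn, hcard⟩
  set s := ν.coeff.support with hs
  -- L0 : convolution formula
  have hL0 : ∀ t : ℝ, (ν * ν).coeff t = ∑ x ∈ s, ν.coeff x * ν.coeff (t / x) := by
    intro t
    rw [MonoidAlgebra.mul_apply]
    rw [Finsupp.sum]
    apply Finset.sum_congr rfl
    intro x hx
    rw [Finsupp.sum]
    have hx0 : x ≠ 0 := ne_of_gt (hpos x hx)
    have hcongr : ∀ y ∈ s, (if x * y = t then ν.coeff x * ν.coeff y else 0)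
        = if y = t / x then ν.coeff x * ν.coeff y else 0 := by
      intro y _
      congr 1
      simp only [eq_iff_iff]
      rw [eq_div_iff hx0]
      constructor <;> intro h <;> linarith [mul_comm x y, h]
    rw [Finset.sum_congr rfl hcongr, Finset.sum_ite_eq' s (t/x) (fun y => ν.coeff x * ν.coeff y)]
    split_ifs with h
    · rfl
    · rw [Finsupp.notMem_support_iff.mp h, mul_zero]
  -- nonzero term extraction
  have hmem : ∀ t : ℝ, t ∈ (ν * ν).coeff.support → ∃ x ∈ s, ν.coeff x ≠ 0 ∧ ν.coeff (t/x) ≠ 0 ∧ t = x * (t/x) := by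
    intro t ht
    have h1 : (ν * ν).coeff t ≠ 0 := Finsupp.mem_support_iff.mp ht
    rw [hL0] at h1
    obtain ⟨x, hx, hne⟩ := Finset.exists_ne_zero_of_sum_ne_zero h1
    have hx0 : x ≠ 0 := ne_of_gt (hpos x hx)
    refine ⟨x, hx, ?_, ?_, ?_⟩
    · exact fun h => hne (by rw [h, zero_mul])
    · exact fun h => hne (by rw [h, mul_zero])
    · rw [mul_div_cancel₀ t hx0]
  -- card ≥ 3
  have hcard3 : 3 ≤ s.card := by
    by_contra hlt
    push_neg at hlt
    obtain ⟨a, b, hab⟩ : ∃ a b : ℝ, s ⊆ {a, b} := by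
      rcases Finset.eq_empty_or_nonempty s with he | hne
      · exact ⟨0, 0, by rw [he]; exact Finset.empty_subset _⟩
      · refine ⟨s.min' hne, s.max' hne, ?_⟩
        intro x hx
        simp only [Finset.mem_insert, Finset.mem_singleton]
        by_contra hc
        push_neg at hc
        have h3 : ({s.min' hne, x, s.max' hne} : Finset ℝ) ⊆ s := by
          intro y hy
          simp only [Finset.mem_insert, Finset.mem_singleton] at hy
          rcases hy with rfl | rfl | rfl
          · exact s.min'_mem hne
          · exact hx
          · exact s.max'_mem hne
        have hc3 : ({s.min' hne, x, s.max' hne} : Finset ℝ).card = 3 := by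
          rw [Finset.card_insert_of_notMem, Finset.card_insert_of_notMem, Finset.card_singleton]
          · simp only [Finset.mem_singleton]; exact hc.2
          · simp only [Finset.mem_insert, Finset.mem_singleton]
            push_neg
            exact ⟨fun h => hc.1 h.symm, fun h => by
              have := s.min'_le x hx
              have := s.le_max' x hx
              have hxx : x = s.max' hne := le_antisymm (s.le_max' x hx) (h ▸ s.min'_le x hx)
              exact hc.2 hxx⟩
        have := Finset.card_le_card h3
        omega
    have hsub : (ν * ν).coeff.support ⊆ ({a*a, a*b, b*b} : Finset ℝ) := by
      intro t ht
      obtain ⟨x, hx, _, hy, heq⟩ := hmem t ht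
      have hys : t / x ∈ s := Finsupp.mem_support_iff.mpr hy
      have h1 := hab hx
      have h2 := hab hys
      simp only [Finset.mem_insert, Finset.mem_singleton] at h1 h2 ⊢
      rcases h1 with rfl | rfl <;> rcases h2 with h2 | h2 <;>
        rw [heq, h2] <;> simp [mul_comm]
    have h4 := Finset.card_le_card hsub
    have h5 : ({a*a, a*b, b*b} : Finset ℝ).card ≤ 3 := by
      apply le_trans (Finset.card_insert_le _ _)
      simp [Finset.card_insert_le]
      exact lt_of_le_of_lt (Finset.card_insert_le _ _) (by simp)
    omega
  -- basic elements
  have hne : s.Nonempty := Finset.card_pos.mp (by omega)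
  set lam1 := s.min' hne with hlam1
  set lamq := s.max' hne with hlamq
  have hlam1s : lam1 ∈ s := s.min'_mem hne
  have hlamqs : lamq ∈ s := s.max'_mem hne
  have h01 : 0 < lam1 := hpos _ hlam1s
  have h0q : 0 < lamq := hpos _ hlamqs
  have hminle : ∀ x ∈ s, lam1 ≤ x := fun x hx => s.min'_le x hx
  have hlemax : ∀ x ∈ s, x ≤ lamq := fun x hx => s.le_max' x hx
  have hsmall : ∀ z : ℝ, z < lam1 → ν.coeff z = 0 := by
    intro z hz
    by_contra hc
    exact absurd (hminle z (Finsupp.mem_support_iff.mpr hc)) (not_le.mpr hz)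
  have hbig : ∀ z : ℝ, lamq < z → ν.coeff z = 0 := by
    intro z hz
    by_contra hc
    exact absurd (hlemax z (Finsupp.mem_support_iff.mpr hc)) (not_le.mpr hz)
  have hne1 : (s.erase lam1).Nonempty := by
    rw [← Finset.card_pos, Finset.card_erase_of_mem hlam1s]; omega
  have hneq : (s.erase lamq).Nonempty := by
    rw [← Finset.card_pos, Finset.card_erase_of_mem hlamqs]; omega
  set lam2 := (s.erase lam1).min' hne1 with hlam2
  set lamq1 := (s.erase lamq).max' hneq with hlamq1
  have hlam2s : lam2 ∈ s := Finset.mem_of_mem_erase ((s.erase lam1).min'_mem hne1)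
  have hlamq1s : lamq1 ∈ s := Finset.mem_of_mem_erase ((s.erase lamq).max'_mem hneq)
  have h02 : 0 < lam2 := hpos _ hlam2s
  have h0q1 : 0 < lamq1 := hpos _ hlamq1s
  have hlt12 : lam1 < lam2 := by
    have h1 := (s.erase lam1).min'_mem hne1
    have h2 : lam2 ≠ lam1 := (Finset.mem_erase.mp h1).1
    exact lt_of_le_of_ne (hminle _ hlam2s) (Ne.symm h2)
  have hltq1q : lamq1 < lamq := by
    have h1 := (s.erase lamq).max'_mem hneq
    have h2 : lamq1 ≠ lamq := (Finset.mem_erase.mp h1).1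
    exact lt_of_le_of_ne (hlemax _ hlamq1s) h2
  have h2le : ∀ x ∈ s, x ≠ lam1 → lam2 ≤ x := by
    intro x hx hx1
    exact (s.erase lam1).min'_le x (Finset.mem_erase.mpr ⟨hx1, hx⟩)
  have hq1ge : ∀ x ∈ s, x ≠ lamq → x ≤ lamq1 := by
    intro x hx hxq
    exact (s.erase lamq).le_max' x (Finset.mem_erase.mpr ⟨hxq, hx⟩)
  have hlamq1ne1 : lamq1 ≠ lam1 := by
    intro hq11
    have hsub2 : s ⊆ {lam1, lamq} := by
      intro x hx
      simp only [Finset.mem_insert, Finset.mem_singleton]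
      by_cases hxq : x = lamq
      · right; exact hxq
      · left
        have := hq1ge x hx hxq
        rw [hq11] at this
        exact le_antisymm this (hminle x hx)
    have := Finset.card_le_card hsub2
    have : s.card ≤ 2 := le_trans this (le_trans (Finset.card_insert_le _ _) (by simp))
    omega
  have h2leq1 : lam2 ≤ lamq1 := h2le _ hlamq1s hlamq1ne1
  have h2ltq : lam2 < lamq := lt_of_le_of_lt h2leq1 hltq1q
  have hnu1 : ν.coeff lam1 ≠ 0 := Finsupp.mem_support_iff.mp hlam1s
  have hnu2 : ν.coeff lam2 ≠ 0 := Finsupp.mem_support_iff.mp hlam2s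
  have hnuq : ν.coeff lamq ≠ 0 := Finsupp.mem_support_iff.mp hlamqs
  have hnuq1 : ν.coeff lamq1 ≠ 0 := Finsupp.mem_support_iff.mp hlamq1s
  -- the four extreme coefficients
  have hA : (ν * ν).coeff (lam1 * lam1) = ν.coeff lam1 * ν.coeff lam1 := by
    rw [hL0]
    rw [Finset.sum_eq_single_of_mem lam1 hlam1s]
    · rw [mul_div_cancel_left₀ _ (ne_of_gt h01)]
    · intro y hy hyne
      have hy0 : 0 < y := hpos y hy
      have h1 : lam1 < y := lt_of_le_of_ne (hminle y hy) (Ne.symm hyne)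
      have h2 : lam1 * lam1 / y < lam1 := by
        rw [div_lt_iff₀ hy0]
        exact mul_lt_mul_of_pos_left h1 h01
      rw [hsmall _ h2, mul_zero]
  have hD : (ν * ν).coeff (lamq * lamq) = ν.coeff lamq * ν.coeff lamq := by
    rw [hL0]
    rw [Finset.sum_eq_single_of_mem lamq hlamqs]
    · rw [mul_div_cancel_left₀ _ (ne_of_gt h0q)]
    · intro y hy hyne
      have hy0 : 0 < y := hpos y hy
      have h1 : y < lamq := lt_of_le_of_ne (hlemax y hy) hyne
      have h2 : lamq < lamq * lamq / y := by
        rw [lt_div_iff₀ hy0]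
        exact mul_lt_mul_of_pos_left h1 h0q
      rw [hbig _ h2, mul_zero]
  have hB : (ν * ν).coeff (lam1 * lam2) = 2 * (ν.coeff lam1 * ν.coeff lam2) := by
    rw [hL0]
    rw [← Finset.sum_subset (by
        intro y hy
        simp only [Finset.mem_insert, Finset.mem_singleton] at hy
        rcases hy with rfl | rfl
        exacts [hlam1s, hlam2s] : ({lam1, lam2} : Finset ℝ) ⊆ s)]
    · rw [Finset.sum_pair (ne_of_lt hlt12)]
      rw [mul_div_cancel_left₀ _ (ne_of_gt h01), mul_div_cancel_right₀ _ (ne_of_gt h02)]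
      ring
    · intro y hy hyn
      simp only [Finset.mem_insert, Finset.mem_singleton] at hyn
      push_neg at hyn
      have hy0 : 0 < y := hpos y hy
      have h1 : lam2 < y := lt_of_le_of_ne (h2le y hy hyn.1) (Ne.symm hyn.2)
      have h2 : lam1 * lam2 / y < lam1 := by
        rw [div_lt_iff₀ hy0]
        calc lam1 * lam2 < lam1 * y := mul_lt_mul_of_pos_left h1 h01
          _ = lam1 * y := rfl
      rw [hsmall _ h2, mul_zero]
  have hC : (ν * ν).coeff (lamq1 * lamq) = 2 * (ν.coeff lamq1 * ν.coeff lamq) := by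
    rw [hL0]
    rw [← Finset.sum_subset (by
        intro y hy
        simp only [Finset.mem_insert, Finset.mem_singleton] at hy
        rcases hy with rfl | rfl
        exacts [hlamq1s, hlamqs] : ({lamq1, lamq} : Finset ℝ) ⊆ s)]
    · rw [Finset.sum_pair (ne_of_lt hltq1q)]
      rw [mul_div_cancel_left₀ _ (ne_of_gt h0q1), mul_div_cancel_right₀ _ (ne_of_gt h0q)]
      ring
    · intro y hy hyn
      simp only [Finset.mem_insert, Finset.mem_singleton] at hyn
      push_neg at hyn
      have hy0 : 0 < y := hpos y hy
      have h1 : y < lamq1 := lt_of_le_of_ne (hq1ge y hy hyn.2) hyn.1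
      have h2 : lamq < lamq1 * lamq / y := by
        rw [lt_div_iff₀ hy0]
        calc lamq * y < lamq * lamq1 := mul_lt_mul_of_pos_left h1 h0q
          _ = lamq1 * lamq := mul_comm _ _
      rw [hbig _ h2, mul_zero]
  -- ordering of the four products
  have hAB : lam1 * lam1 < lam1 * lam2 := mul_lt_mul_of_pos_left hlt12 h01
  have hBC : lam1 * lam2 < lamq1 * lamq := by
    calc lam1 * lam2 < lamq1 * lam2 :=
          mul_lt_mul_of_pos_right (lt_of_lt_of_le hlt12 h2leq1) h02
      _ < lamq1 * lamq := mul_lt_mul_of_pos_left h2ltq h0q1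
  have hCD : lamq1 * lamq < lamq * lamq := mul_lt_mul_of_pos_right hltq1q h0q
  -- support equality
  have hsupp : (ν * ν).coeff.support = ({lam1*lam1, lam1*lam2, lamq1*lamq, lamq*lamq} : Finset ℝ) := by
    have hsub : ({lam1*lam1, lam1*lam2, lamq1*lamq, lamq*lamq} : Finset ℝ) ⊆ (ν * ν).coeff.support := by
      intro t ht
      simp only [Finset.mem_insert, Finset.mem_singleton] at ht
      rw [Finsupp.mem_support_iff]
      rcases ht with rfl | rfl | rfl | rfl
      · rw [hA]; exact mul_ne_zero hnu1 hnu1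
      · rw [hB]; exact mul_ne_zero two_ne_zero (mul_ne_zero hnu1 hnu2)
      · rw [hC]; exact mul_ne_zero two_ne_zero (mul_ne_zero hnuq1 hnuq)
      · rw [hD]; exact mul_ne_zero hnuq hnuq
    have hc4 : ({lam1*lam1, lam1*lam2, lamq1*lamq, lamq*lamq} : Finset ℝ).card = 4 := by
      rw [Finset.card_insert_of_notMem, Finset.card_insert_of_notMem,
        Finset.card_insert_of_notMem, Finset.card_singleton]
      · simp only [Finset.mem_singleton]; exact ne_of_lt hCD
      · simp only [Finset.mem_insert, Finset.mem_singleton]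
        push_neg
        exact ⟨ne_of_lt hBC, ne_of_lt (lt_trans hBC hCD)⟩
      · simp only [Finset.mem_insert, Finset.mem_singleton]
        push_neg
        exact ⟨ne_of_lt hAB, ne_of_lt (lt_trans hAB hBC),
          ne_of_lt (lt_trans (lt_trans hAB hBC) hCD)⟩
    exact (Finset.eq_of_subset_of_card_le hsub (by omega)).symm
  have hzero : ∀ t : ℝ, t ≠ lam1*lam1 → t ≠ lam1*lam2 → t ≠ lamq1*lamq → t ≠ lamq*lamq →
      (ν * ν).coeff t = 0 := by
    intro t h1 h2 h3 h4
    by_contra hc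
    have : t ∈ (ν * ν).coeff.support := Finsupp.mem_support_iff.mpr hc
    rw [hsupp] at this
    simp only [Finset.mem_insert, Finset.mem_singleton] at this
    tauto
  -- the ratio and powers
  set ρ := lamq1 / lamq with hρ
  have hρ0 : 0 < ρ := div_pos h0q1 h0q
  have hρ1 : ρ < 1 := (div_lt_one h0q).mpr hltq1q
  have hpw1 : lamq * ρ ^ 1 = lamq1 := by
    rw [hρ, pow_one, mul_div_cancel₀ _ (ne_of_gt h0q)]
  have hpwa : ∀ i j : ℕ, i < j → lamq * ρ ^ j < lamq * ρ ^ i := by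
    intro i j hij
    exact mul_lt_mul_of_pos_left (pow_lt_pow_right_of_lt_one₀ hρ0 hρ1 hij) h0q
  have hpwmono : ∀ i j : ℕ, i ≤ j → lamq * ρ ^ j ≤ lamq * ρ ^ i := by
    intro i j hij
    rcases eq_or_lt_of_le hij with rfl | h
    · exact le_refl _
    · exact le_of_lt (hpwa i j h)
  have hpwinj : ∀ i j : ℕ, lamq * ρ ^ i = lamq * ρ ^ j → i = j := by
    intro i j hij
    rcases lt_trichotomy i j with h | h | h
    · exact absurd hij (ne_of_gt (hpwa i j h))
    · exact h
    · exact absurd hij (ne_of_lt (hpwa j i h))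
  have hpwle : ∀ m : ℕ, lamq * ρ ^ m ≤ lamq := by
    intro m
    have := hpwmono 0 m (Nat.zero_le m)
    simpa using this
  have hpw0 : ∀ m : ℕ, 0 < lamq * ρ ^ m := fun m => by positivity
  -- Step II : all support points are powers
  have hkey : ∀ k : ℕ, ∀ x, x ∈ s → (s.filter (fun y => x < y)).card ≤ k →
      ∃ m : ℕ, x = lamq * ρ ^ m := by
    intro k
    induction k with
    | zero =>
      intro x hx hle
      refine ⟨0, ?_⟩
      have hfe : (s.filter (fun y => x < y)) = ∅ := Finset.card_eq_zero.mp (Nat.le_zero.mp hle)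
      have : ¬ x < lamq := by
        intro hlt
        have : lamq ∈ s.filter (fun y => x < y) := Finset.mem_filter.mpr ⟨hlamqs, hlt⟩
        rw [hfe] at this
        exact absurd this (Finset.notMem_empty _)
      have hxq : x = lamq := le_antisymm (hlemax x hx) (not_lt.mp this)
      rw [hxq, pow_zero, mul_one]
    | succ k ih =>
      intro x hx hle
      by_cases hxq : x = lamq
      · exact ⟨0, by rw [hxq, pow_zero, mul_one]⟩
      by_cases hxq1 : x = lamq1
      · exact ⟨1, by rw [hxq1, hpw1]⟩
      have hx0 : 0 < x := hpos x hx
      have hxlt : x < lamq1 := lt_of_le_of_ne (hq1ge x hx hxq) hxq1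
      by_contra hno
      push_neg at hno
      -- (ν*ν)(x*lamq) = 0 since x*lamq isn't one of the four
      have ht0 : (ν * ν).coeff (x * lamq) = 0 := by
        apply hzero
        · apply ne_of_gt
          calc lam1 * lam1 < lam1 * lam2 := hAB
            _ ≤ x * lam2 := mul_le_mul_of_nonneg_right (hminle x hx) (le_of_lt h02)
            _ < x * lamq := mul_lt_mul_of_pos_left h2ltq hx0
        · apply ne_of_gt
          calc lam1 * lam2 ≤ x * lam2 := mul_le_mul_of_nonneg_right (hminle x hx) (le_of_lt h02)
            _ < x * lamq := mul_lt_mul_of_pos_left h2ltq hx0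
        · exact ne_of_lt (mul_lt_mul_of_pos_right hxlt h0q)
        · exact ne_of_lt (mul_lt_mul_of_pos_right (lt_trans hxlt hltq1q) h0q)
      have hcalc : (ν * ν).coeff (x * lamq) = 2 * (ν.coeff x * ν.coeff lamq) := by
        rw [hL0]
        rw [← Finset.sum_subset (by
            intro y hy
            simp only [Finset.mem_insert, Finset.mem_singleton] at hy
            rcases hy with rfl | rfl
            exacts [hx, hlamqs] : ({x, lamq} : Finset ℝ) ⊆ s)]
        · rw [Finset.sum_pair hxq]
          rw [mul_div_cancel_left₀ _ (ne_of_gt hx0), mul_div_cancel_right₀ _ (ne_of_gt h0q)]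
          ring
        · intro y hy hyn
          simp only [Finset.mem_insert, Finset.mem_singleton] at hyn
          push_neg at hyn
          by_contra hterm
          have hzy : ν.coeff (x * lamq / y) ≠ 0 := by
            intro h
            exact hterm (by rw [h, mul_zero])
          have hzs : x * lamq / y ∈ s := Finsupp.mem_support_iff.mpr hzy
          have hy0 : 0 < y := hpos y hy
          set z := x * lamq / y with hz
          have hyz : y * z = x * lamq := by
            rw [hz, mul_div_cancel₀ _ (ne_of_gt hy0)]
          have hyltq : y < lamq := lt_of_le_of_ne (hlemax y hy) hyn.2
          have hxy : x < y := by
            rcases lt_trichotomy x y with h | h | h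
            · exact h
            · exact absurd h hyn.1.symm
            · exfalso
              have hzq : lamq < z := by
                rw [hz, lt_div_iff₀ hy0]
                calc lamq * y = y * lamq := mul_comm _ _
                  _ < x * lamq := mul_lt_mul_of_pos_right h h0q
              exact hzy (hbig z hzq)
          have hxz : x < z := by
            rw [hz, lt_div_iff₀ hy0]
            calc x * y < x * lamq := mul_lt_mul_of_pos_left hyltq hx0
              _ = x * lamq := rfl
          -- card bounds for IH
          have hcb : ∀ w, w ∈ s → x < w → (s.filter (fun v => w < v)).card ≤ k := by
            intro w hws hxw
            have hsub : (s.filter (fun v => w < v)) ⊆ (s.filter (fun v => x < v)).erase w := by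
              intro v hv
              rw [Finset.mem_filter] at hv
              rw [Finset.mem_erase, Finset.mem_filter]
              exact ⟨ne_of_gt hv.2, hv.1, lt_trans hxw hv.2⟩
            have h1 := Finset.card_le_card hsub
            have h2 : w ∈ s.filter (fun v => x < v) := Finset.mem_filter.mpr ⟨hws, hxw⟩
            rw [Finset.card_erase_of_mem h2] at h1
            omega
          obtain ⟨i, hi⟩ := ih y hy (hcb y hy hxy)
          obtain ⟨j, hj⟩ := ih z hzs (hcb z hzs hxz)
          apply hno (i + j)
          have hq0 : lamq ≠ 0 := ne_of_gt h0q
          have h1 : y * z = x * lamq := hyz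
          rw [hi, hj] at h1
          have h2 : lamq * (lamq * ρ ^ (i+j)) = lamq * x := by
            rw [pow_add]
            linear_combination h1
          exact (mul_left_cancel₀ hq0 h2).symm
      rw [hcalc] at ht0
      have := Finsupp.mem_support_iff.mp hx
      have h2 : ν.coeff x * ν.coeff lamq ≠ 0 := mul_ne_zero this hnuq
      rcases mul_eq_zero.mp ht0 with h | h
      · norm_num at h
      · exact h2 h
  have hstep2 : ∀ x ∈ s, ∃ m : ℕ, x = lamq * ρ ^ m := fun x hx => hkey _ x hx le_rfl
  obtain ⟨m1, hm1⟩ := hstep2 lam1 hlam1s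
  obtain ⟨m2, hm2⟩ := hstep2 lam2 hlam2s
  have hq0 : lamq ≠ 0 := ne_of_gt h0q
  have hm12 : m2 < m1 := by
    by_contra h
    push_neg at h
    have := hpwmono m1 m2 h
    rw [← hm1, ← hm2] at this
    exact absurd this (not_le.mpr hlt12)
  have hm2pos : 1 ≤ m2 := by
    rcases Nat.eq_zero_or_pos m2 with h | h
    · exfalso
      rw [h, pow_zero, mul_one] at hm2
      exact absurd hm2 (ne_of_lt h2ltq)
    · exact h
  set c := fun m : ℕ => ν.coeff (lamq * ρ ^ m) with hcdef
  have hc0 : c 0 = ν.coeff lamq := by simp [hcdef]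
  have hc1 : c 1 = ν.coeff lamq1 := by rw [hcdef]; simp only; rw [hpw1]
  have hc0ne : c 0 ≠ 0 := by rw [hc0]; exact hnuq
  have hc1ne : c 1 ≠ 0 := by rw [hc1]; exact hnuq1
  have hcm1 : c m1 = ν.coeff lam1 := by rw [hcdef]; simp only; rw [← hm1]
  have hcm2 : c m2 = ν.coeff lam2 := by rw [hcdef]; simp only; rw [← hm2]
  have hcm_gt : ∀ m : ℕ, m1 < m → c m = 0 := by
    intro m hm
    apply hsmall
    rw [hm1]
    exact hpwa m1 m hm
  -- convolution in terms of c
  have hconv : ∀ n : ℕ, (ν * ν).coeff (lamq * lamq * ρ ^ n) =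
      ∑ i ∈ range (n+1), c i * c (n-i) := by
    intro n
    rw [hL0]
    have himg : s ⊆ (range (m1+n+1)).image (fun m => lamq * ρ ^ m) := by
      intro x hx
      obtain ⟨m, hmx⟩ := hstep2 x hx
      apply Finset.mem_image.mpr
      refine ⟨m, ?_, hmx.symm⟩
      rw [Finset.mem_range]
      by_contra h
      push_neg at h
      have hlt : x < lam1 := by
        rw [hmx, hm1]
        exact hpwa m1 m (by omega)
      exact absurd (hminle x hx) (not_le.mpr hlt)
    rw [Finset.sum_subset himg (fun x _ hxs => by
      rw [Finsupp.notMem_support_iff.mp hxs, zero_mul])]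
    rw [Finset.sum_image (fun a _ b _ h => hpwinj a b h)]
    rw [← Finset.sum_subset (Finset.range_subset_range.mpr (by omega : n+1 ≤ m1+n+1)) ?_]
    · apply Finset.sum_congr rfl
      intro m hmr
      rw [Finset.mem_range] at hmr
      have hmn : m ≤ n := by omega
      congr 1
      have hd : lamq * lamq * ρ ^ n / (lamq * ρ ^ m) = lamq * ρ ^ (n - m) := by
        rw [div_eq_iff (ne_of_gt (hpw0 m)), ← mul_assoc]
        rw [mul_assoc (lamq * ρ ^ (n-m)) lamq (ρ ^ m)]
        rw [mul_comm lamq (ρ ^ m)]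
        rw [← mul_assoc, mul_assoc _ (ρ ^ (n-m)) (ρ ^ m), ← pow_add]
        rw [Nat.sub_add_cancel hmn]
        ring
      rw [hd]
    · intro m hmr hmn
      rw [Finset.mem_range] at hmr hmn
      push_neg at hmn
      have hgt : lamq < lamq * lamq * ρ ^ n / (lamq * ρ ^ m) := by
        rw [lt_div_iff₀ (hpw0 m)]
        have h1 : ρ ^ m < ρ ^ n := pow_lt_pow_right_of_lt_one₀ hρ0 hρ1 (by omega)
        calc lamq * (lamq * ρ ^ m) = lamq * lamq * ρ ^ m := by ring
          _ < lamq * lamq * ρ ^ n := by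
            apply mul_lt_mul_of_pos_left h1 (by positivity)
      rw [hbig _ hgt, mul_zero]
  -- injectivity on double products
  have hinj2 : ∀ i j : ℕ, lamq * lamq * ρ ^ i = lamq * lamq * ρ ^ j → i = j := by
    intro i j h
    apply hpwinj
    apply mul_left_cancel₀ hq0
    calc lamq * (lamq * ρ ^ i) = lamq * lamq * ρ ^ i := by ring
      _ = lamq * lamq * ρ ^ j := h
      _ = lamq * (lamq * ρ ^ j) := by ring
  have hAex : lam1 * lam1 = lamq * lamq * ρ ^ (m1+m1) := by
    rw [hm1, pow_add]; ring
  have hBex : lam1 * lam2 = lamq * lamq * ρ ^ (m1+m2) := by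
    rw [hm1, hm2, pow_add]; ring
  have hCex : lamq1 * lamq = lamq * lamq * ρ ^ 1 := by
    rw [← hpw1]; ring
  have hDex : lamq * lamq = lamq * lamq * ρ ^ 0 := by rw [pow_zero]; ring
  have hconv0 : ∀ k : ℕ, k ≠ 0 → k ≠ 1 → k ≠ m1+m2 → k ≠ m1+m1 →
      ∑ i ∈ range (k+1), c i * c (k-i) = 0 := by
    intro k h0 h1 h2 h3
    rw [← hconv]
    apply hzero
    · intro h; rw [hAex] at h; exact h3 (hinj2 _ _ h)
    · intro h; rw [hBex] at h; exact h2 (hinj2 _ _ h)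
    · intro h; rw [hCex] at h; exact h1 (hinj2 _ _ h)
    · intro h; exact h0 (hinj2 k 0 (by rw [pow_zero, mul_one]; exact h))
  -- the square-root sequence
  set β : ℝ := 2 * c 1 / c 0 with hβdef
  have hβne : β ≠ 0 := div_ne_zero (mul_ne_zero two_ne_zero hc1ne) hc0ne
  set u := sqrtSeq (c 0) β with hudef
  have hu0 : u 0 = c 0 := rfl
  have hu1 : u 1 = c 1 := by
    rw [hudef, sqrtSeq_succ, sqrtSeq_zero, hβdef]
    push_cast
    field_simp
    norm_num
  have hune : ∀ n, u n ≠ 0 := sqrtSeq_ne_zero hc0ne hβne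
  -- main induction : c n = u n for n < m1 + m2
  have hmain : ∀ n : ℕ, n < m1 + m2 → c n = u n := by
    intro n
    induction n using Nat.strong_induction_on with
    | _ n ih =>
    intro hn
    rcases n with _ | _ | n
    · exact hu0.symm
    · exact hu1.symm
    · have h0 : ∑ i ∈ range (n+3), c i * c (n+2-i) = 0 := by
        apply hconv0 (n+2) (by omega) (by omega) (by omega) (by omega)
      have hV : ∑ i ∈ range (n+3), u i * u (n+2-i) = 0 := by
        have := sqrtSeq_conv (c 0) β (n+2) (by omega)
        rw [← hudef] at this
        exact this
      have e1 : ∑ i ∈ range (n+3), c i * c (n+2-i) =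
          c 0 * c (n+2) + (∑ i ∈ range (n+1), c (i+1) * c (n+1-i)) + c (n+2) * c 0 := by
        rw [Finset.sum_range_succ (fun i => c i * c (n+2-i)) (n+2)]
        rw [Finset.sum_range_succ' (fun i => c i * c (n+2-i)) (n+1)]
        simp only [Nat.sub_self, Nat.sub_zero]
        have hcongr : ∀ i ∈ range (n+1), c (i+1) * c (n+2-(i+1)) = c (i+1) * c (n+1-i) := by
          intro i hi
          congr 2
          omega
        rw [Finset.sum_congr rfl hcongr]
        ring
      have e2 : ∑ i ∈ range (n+3), u i * u (n+2-i) =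
          u 0 * u (n+2) + (∑ i ∈ range (n+1), u (i+1) * u (n+1-i)) + u (n+2) * u 0 := by
        rw [Finset.sum_range_succ (fun i => u i * u (n+2-i)) (n+2)]
        rw [Finset.sum_range_succ' (fun i => u i * u (n+2-i)) (n+1)]
        simp only [Nat.sub_self, Nat.sub_zero]
        have hcongr : ∀ i ∈ range (n+1), u (i+1) * u (n+2-(i+1)) = u (i+1) * u (n+1-i) := by
          intro i hi
          congr 2
          omega
        rw [Finset.sum_congr rfl hcongr]
        ring
      have hmid : ∑ i ∈ range (n+1), c (i+1) * c (n+1-i) =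
          ∑ i ∈ range (n+1), u (i+1) * u (n+1-i) := by
        apply Finset.sum_congr rfl
        intro i hi
        rw [Finset.mem_range] at hi
        rw [ih (i+1) (by omega) (by omega), ih (n+1-i) (by omega) (by omega)]
      rw [e1, hmid] at h0
      rw [e2] at hV
      have hfin : 2 * c 0 * (c (n+2) - u (n+2)) = 0 := by
        rw [hu0] at hV
        linarith only [h0, hV]
      have := mul_eq_zero.mp hfin
      rcases this with h | h
      · exact absurd h (mul_ne_zero two_ne_zero hc0ne)
      · linarith only [h]
  -- endgame
  by_cases hm2ge : 2 ≤ m2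
  · have h1 := hmain (m1+1) (by omega)
    have h2 : c (m1+1) = 0 := hcm_gt _ (by omega)
    exact hune (m1+1) (by rw [← h1, h2])
  · have hm2eq : m2 = 1 := by omega
    by_cases hm1ge : 3 ≤ m1
    · have h1 := hmain 2 (by omega)
      have h2 : c 2 = 0 := by
        by_contra hc2
        have hin : lamq * ρ ^ 2 ∈ s := Finsupp.mem_support_iff.mpr hc2
        have hne1' : lamq * ρ ^ 2 ≠ lam1 := by
          rw [hm1]
          intro h
          have := hpwinj _ _ h
          omega
        have hge := h2le _ hin hne1'
        rw [hm2, hm2eq] at hge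
        exact absurd hge (not_le.mpr (hpwa 1 2 (by omega)))
      exact hune 2 (by rw [← h1, h2])
    · have hm1eq : m1 = 2 := by omega
      have hc2v : c 2 = ν.coeff lam1 := by rw [← hm1eq]; exact hcm1
      have hc2ne : c 2 ≠ 0 := by rw [hc2v]; exact hnu1
      have hCpos : 0 < c 0 * c 1 := by
        have h1 := hnn (lamq1 * lamq)
        rw [hC] at h1
        have h2 : 0 ≤ c 0 * c 1 := by rw [hc0, hc1, mul_comm]; linarith only [h1]
        exact lt_of_le_of_ne h2 (Ne.symm (mul_ne_zero hc0ne hc1ne))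
      have hBpos : 0 < c 1 * c 2 := by
        have h1 := hnn (lam1 * lam2)
        rw [hB] at h1
        have hc1' : c 1 = ν.coeff lam2 := by rw [← hm2eq]; exact hcm2
        have h2 : 0 ≤ c 1 * c 2 := by
          rw [hc2v, hc1', mul_comm]
          linarith only [h1]
        exact lt_of_le_of_ne h2 (Ne.symm (mul_ne_zero hc1ne hc2ne))
      have hconv2 := hconv0 2 (by omega) (by omega) (by omega) (by omega)
      have hexp : c 0 * c 2 + c 1 * c 1 + c 2 * c 0 = 0 := by
        rw [Finset.sum_range_succ, Finset.sum_range_succ, Finset.sum_range_succ,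
          Finset.sum_range_zero] at hconv2
        norm_num at hconv2
        linarith only [hconv2]
      have h4 : (c 0 * c 2) * (c 0 * c 2 + c 1 * c 1 + c 2 * c 0) = 0 := by
        rw [hexp, mul_zero]
      linarith only [mul_pos hCpos hBpos, h4, sq_nonneg (c 0 * c 2)]
end

section
/- Let ν = Σ_{k=1}^q b_k δ_{λ_k} be a real charge with distinct atoms 1 ≤ λ₁ < ⋯ < λ_q and all b_k ≠ 0, with q ≥ 4. If both ν*ν and ν*(tν) are positive measures, then the support of ν*ν contains at least 6 elements. -/
open MeasureTheory MonoidAlgebra Finset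

lemma tCharge_expand (q : ℕ) (l b : ℕ → ℝ) :
    tCharge (∑ k ∈ Finset.Icc 1 q, MonoidAlgebra.single (l k) (b k)) =
    ∑ k ∈ Finset.Icc 1 q, MonoidAlgebra.single (l k) (l k * b k) := by
  unfold tCharge
  rw [MonoidAlgebra.coeff_sum]
  rw [← Finsupp.sum_finsetSum_index (fun a => by simp)
    (fun a x y => by rw [mul_add, MonoidAlgebra.single_add])]
  exact Finset.sum_congr rfl fun k _ => Finsupp.sum_single_index (by simp)

lemma expand_eval (q : ℕ) (l b c : ℕ → ℝ) (t : ℝ) :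
    ((∑ k ∈ Finset.Icc 1 q, MonoidAlgebra.single (l k) (b k)) *
     (∑ k ∈ Finset.Icc 1 q, MonoidAlgebra.single (l k) (c k)) : MonoidAlgebra ℝ ℝ).coeff t
    = ∑ i ∈ Finset.Icc 1 q, ∑ j ∈ Finset.Icc 1 q,
        (if l i * l j = t then b i * c j else 0) := by
  rw [Finset.sum_mul_sum]
  simp only [MonoidAlgebra.single_mul_single]
  rw [MonoidAlgebra.coeff_sum, Finsupp.finset_sum_apply]
  refine Finset.sum_congr rfl fun i _ => ?_
  rw [MonoidAlgebra.coeff_sum, Finsupp.finset_sum_apply]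
  refine Finset.sum_congr rfl fun j _ => ?_
  exact Finsupp.single_apply

lemma double_sum_eq (q : ℕ) (f : ℕ × ℕ → ℝ) (cond : ℕ × ℕ → Prop) [DecidablePred cond]
    (S : Finset (ℕ × ℕ))
    (hS : ∀ p, p ∈ Finset.Icc 1 q ×ˢ Finset.Icc 1 q → (cond p ↔ p ∈ S))
    (hS' : S ⊆ Finset.Icc 1 q ×ˢ Finset.Icc 1 q) :
    ∑ i ∈ Finset.Icc 1 q, ∑ j ∈ Finset.Icc 1 q, (if cond (i,j) then f (i,j) else 0)
      = ∑ p ∈ S, f p := by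
  rw [← Finset.sum_product', ← Finset.sum_filter]
  apply Finset.sum_congr _ (fun _ _ => rfl)
  ext p
  simp only [Finset.mem_filter]
  constructor
  · rintro ⟨hp, hc⟩; exact (hS p hp).1 hc
  · intro hp; exact ⟨hS' hp, (hS p (hS' hp)).2 hp⟩

set_option maxHeartbeats 2000000 in
/-- If ν is a charge with at least 4 atoms in [1,∞) such that ν*ν and ν*(tν) are
positive measures, then ν*ν has at least 6 atoms. -/
theorem square_at_least_six_atoms (q : ℕ) (hq : 4 ≤ q) (l b : ℕ → ℝ)
    (ν : MonoidAlgebra ℝ ℝ)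
    (hν : ν = ∑ k ∈ Finset.Icc 1 q, MonoidAlgebra.single (l k) (b k))
    (h1 : 1 ≤ l 1) (hmono : ∀ i j, 1 ≤ i → i < j → j ≤ q → l i < l j)
    (hb : ∀ k, 1 ≤ k → k ≤ q → b k ≠ 0)
    (hpos1 : ∀ t : ℝ, 0 ≤ (ν * ν).coeff t)
    (hpos2 : ∀ t : ℝ, 0 ≤ (ν * tCharge ν).coeff t) :
    6 ≤ (ν * ν).coeff.support.card := by
  obtain ⟨m, rfl⟩ : ∃ m, q = m + 4 := ⟨q - 4, by omega⟩
  have hle : ∀ i j : ℕ, 1 ≤ i → i ≤ j → j ≤ m + 4 → l i ≤ l j := by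
    intro i j hi hij hj
    rcases eq_or_lt_of_le hij with rfl | h
    · exact le_refl _
    · exact (hmono i j hi h hj).le
  have hp : ∀ k, 1 ≤ k → k ≤ m + 4 → 0 < l k := by
    intro k h1k hk; have := hle 1 k (by omega) h1k hk; linarith
  have mulle : ∀ i j i' j' : ℕ, 1 ≤ i → i ≤ i' → i' ≤ m + 4 → 1 ≤ j → j ≤ j' → j' ≤ m + 4 →
      l i * l j ≤ l i' * l j' := by
    intro i j i' j' h1 h2 h3 h4 h5 h6
    have a1 := hle i i' h1 h2 h3
    have a2 := hle j j' h4 h5 h6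
    have p1 := hp i h1 (by omega)
    have p2 := hp j h4 (by omega)
    nlinarith
  have mullt : ∀ i j i' j' : ℕ, 1 ≤ i → i ≤ i' → i' ≤ m + 4 → 1 ≤ j → j ≤ j' → j' ≤ m + 4 →
      (i < i' ∨ j < j') → l i * l j < l i' * l j' := by
    intro i j i' j' h1 h2 h3 h4 h5 h6 h7
    have a1 := hle i i' h1 h2 h3
    have a2 := hle j j' h4 h5 h6
    have p1 := hp i h1 (by omega)
    have p2 := hp j h4 (by omega)
    rcases h7 with h | h
    · have := hmono i i' h1 h h3; nlinarith
    · have := hmono j j' h4 h h6; nlinarith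
  have EV1 : ∀ (t : ℝ) (S : Finset (ℕ × ℕ)),
      (∀ p : ℕ × ℕ, p ∈ Finset.Icc 1 (m+4) ×ˢ Finset.Icc 1 (m+4) →
        (l p.1 * l p.2 = t ↔ p ∈ S)) →
      S ⊆ Finset.Icc 1 (m+4) ×ˢ Finset.Icc 1 (m+4) →
      (ν * ν).coeff t = ∑ p ∈ S, b p.1 * b p.2 := by
    intro t S hS hS'
    rw [hν, expand_eval]
    exact double_sum_eq (m+4) (fun p => b p.1 * b p.2) (fun p => l p.1 * l p.2 = t) S hS hS'
  have EV2 : ∀ (t : ℝ) (S : Finset (ℕ × ℕ)),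
      (∀ p : ℕ × ℕ, p ∈ Finset.Icc 1 (m+4) ×ˢ Finset.Icc 1 (m+4) →
        (l p.1 * l p.2 = t ↔ p ∈ S)) →
      S ⊆ Finset.Icc 1 (m+4) ×ˢ Finset.Icc 1 (m+4) →
      (ν * tCharge ν).coeff t = ∑ p ∈ S, b p.1 * (l p.2 * b p.2) := by
    intro t S hS hS'
    rw [hν, tCharge_expand, expand_eval]
    exact double_sum_eq (m+4) (fun p => b p.1 * (l p.2 * b p.2))
      (fun p => l p.1 * l p.2 = t) S hS hS'
  -- characterization lemmas
  have ch11 : ∀ p : ℕ × ℕ, p ∈ Finset.Icc 1 (m+4) ×ˢ Finset.Icc 1 (m+4) →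
      (l p.1 * l p.2 = l 1 * l 1 ↔ p ∈ ({(1,1)} : Finset (ℕ × ℕ))) := by
    rintro ⟨i, j⟩ hp
    rw [Finset.mem_product, Finset.mem_Icc, Finset.mem_Icc] at hp
    obtain ⟨⟨hi1, hiq⟩, hj1, hjq⟩ := hp
    dsimp only
    simp only [Finset.mem_singleton, Prod.mk.injEq]
    constructor
    · intro h
      by_contra hc
      have := mullt 1 1 i j (by omega) (by omega) (by omega) (by omega) (by omega) (by omega) (by omega)
      linarith
    · rintro ⟨rfl, rfl⟩; rfl
  have ch12 : ∀ p : ℕ × ℕ, p ∈ Finset.Icc 1 (m+4) ×ˢ Finset.Icc 1 (m+4) →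
      (l p.1 * l p.2 = l 1 * l 2 ↔ p ∈ ({(1,2),(2,1)} : Finset (ℕ × ℕ))) := by
    rintro ⟨i, j⟩ hp
    rw [Finset.mem_product, Finset.mem_Icc, Finset.mem_Icc] at hp
    obtain ⟨⟨hi1, hiq⟩, hj1, hjq⟩ := hp
    dsimp only
    simp only [Finset.mem_insert, Finset.mem_singleton, Prod.mk.injEq]
    constructor
    · intro h
      rcases (show i = 1 ∨ j = 1 ∨ (2 ≤ i ∧ 2 ≤ j) by omega) with rfl | rfl | ⟨h2i, h2j⟩
      · left; refine ⟨rfl, ?_⟩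
        by_contra hc
        rcases (show j ≤ 1 ∨ 3 ≤ j by omega) with h' | h'
        · have := mullt 1 j 1 2 (by omega) (by omega) (by omega) (by omega) (by omega) (by omega) (by omega)
          linarith
        · have := mullt 1 2 1 j (by omega) (by omega) (by omega) (by omega) (by omega) (by omega) (by omega)
          linarith
      · right; refine ⟨?_, rfl⟩
        by_contra hc
        rcases (show i ≤ 1 ∨ 3 ≤ i by omega) with h' | h'
        · have := mullt i 1 1 2 (by omega) (by omega) (by omega) (by omega) (by omega) (by omega) (by omega)
          linarith
        · have := mullt 1 2 1 i (by omega) (by omega) (by omega) (by omega) (by omega) (by omega) (by omega)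
          have hcm := mul_comm (l i) (l 1)
          linarith
      · have := mullt 1 2 i j (by omega) (by omega) (by omega) (by omega) (by omega) (by omega) (by omega)
        linarith
    · rintro (⟨rfl, rfl⟩ | ⟨rfl, rfl⟩)
      · rfl
      · exact mul_comm _ _
  have ch66 : ∀ p : ℕ × ℕ, p ∈ Finset.Icc 1 (m+4) ×ˢ Finset.Icc 1 (m+4) →
      (l p.1 * l p.2 = l (m+4) * l (m+4) ↔ p ∈ ({(m+4, m+4)} : Finset (ℕ × ℕ))) := by
    rintro ⟨i, j⟩ hp
    rw [Finset.mem_product, Finset.mem_Icc, Finset.mem_Icc] at hp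
    obtain ⟨⟨hi1, hiq⟩, hj1, hjq⟩ := hp
    dsimp only
    simp only [Finset.mem_singleton, Prod.mk.injEq]
    constructor
    · intro h
      by_contra hc
      have := mullt i j (m+4) (m+4) (by omega) (by omega) (by omega) (by omega) (by omega) (by omega) (by omega)
      linarith
    · rintro ⟨rfl, rfl⟩; rfl
  have ch56 : ∀ p : ℕ × ℕ, p ∈ Finset.Icc 1 (m+4) ×ˢ Finset.Icc 1 (m+4) →
      (l p.1 * l p.2 = l (m+3) * l (m+4) ↔
        p ∈ ({(m+3, m+4), (m+4, m+3)} : Finset (ℕ × ℕ))) := by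
    rintro ⟨i, j⟩ hp
    rw [Finset.mem_product, Finset.mem_Icc, Finset.mem_Icc] at hp
    obtain ⟨⟨hi1, hiq⟩, hj1, hjq⟩ := hp
    dsimp only
    simp only [Finset.mem_insert, Finset.mem_singleton, Prod.mk.injEq]
    constructor
    · intro h
      rcases (show i = m+4 ∨ j = m+4 ∨ (i ≤ m+3 ∧ j ≤ m+3) by omega) with rfl | rfl | ⟨h3i, h3j⟩
      · right; refine ⟨rfl, ?_⟩
        by_contra hc
        rcases (show j ≤ m+2 ∨ j = m+4 by omega) with h' | rfl
        · have := mullt (m+4) j (m+4) (m+3) (by omega) (by omega) (by omega) (by omega) (by omega)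
            (by omega) (by omega)
          have hcm := mul_comm (l (m+4)) (l (m+3))
          linarith
        · have := mullt (m+3) (m+4) (m+4) (m+4) (by omega) (by omega) (by omega) (by omega)
            (by omega) (by omega) (by omega)
          linarith
      · left
        rcases (show i = m+3 ∨ i ≤ m+2 ∨ i = m+4 by omega) with rfl | h' | rfl
        · exact ⟨rfl, rfl⟩
        · exfalso
          have := mullt i (m+4) (m+3) (m+4) (by omega) (by omega) (by omega) (by omega)
            (by omega) (by omega) (by omega)
          linarith
        · exfalso
          have := mullt (m+3) (m+4) (m+4) (m+4) (by omega) (by omega) (by omega) (by omega)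
            (by omega) (by omega) (by omega)
          linarith
      · exfalso
        have h4 := mulle i j (m+3) (m+3) (by omega) (by omega) (by omega) (by omega) (by omega) (by omega)
        have h5 := mullt (m+3) (m+3) (m+3) (m+4) (by omega) (by omega) (by omega) (by omega)
          (by omega) (by omega) (by omega)
        linarith
    · rintro (⟨rfl, rfl⟩ | ⟨rfl, rfl⟩)
      · rfl
      · exact mul_comm _ _
  -- bottom third atom characterizations
  have ch13A : l 1 * l 3 < l 2 * l 2 →
      ∀ p : ℕ × ℕ, p ∈ Finset.Icc 1 (m+4) ×ˢ Finset.Icc 1 (m+4) →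
      (l p.1 * l p.2 = l 1 * l 3 ↔ p ∈ ({(1,3),(3,1)} : Finset (ℕ × ℕ))) := by
    rintro hlt ⟨i, j⟩ hp
    rw [Finset.mem_product, Finset.mem_Icc, Finset.mem_Icc] at hp
    obtain ⟨⟨hi1, hiq⟩, hj1, hjq⟩ := hp
    dsimp only
    simp only [Finset.mem_insert, Finset.mem_singleton, Prod.mk.injEq]
    constructor
    · intro h
      rcases (show i = 1 ∨ j = 1 ∨ (2 ≤ i ∧ 2 ≤ j) by omega) with rfl | rfl | ⟨h2i, h2j⟩
      · left; refine ⟨rfl, ?_⟩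
        by_contra hc
        rcases (show j ≤ 2 ∨ 4 ≤ j by omega) with h' | h'
        · have := mullt 1 j 1 3 (by omega) (by omega) (by omega) (by omega) (by omega)
            (by omega) (by omega)
          linarith
        · have := mullt 1 3 1 j (by omega) (by omega) (by omega) (by omega) (by omega)
            (by omega) (by omega)
          linarith
      · right; refine ⟨?_, rfl⟩
        by_contra hc
        have hcm := mul_comm (l i) (l 1)
        rcases (show i ≤ 2 ∨ 4 ≤ i by omega) with h' | h'
        · have := mullt 1 i 1 3 (by omega) (by omega) (by omega) (by omega) (by omega)
            (by omega) (by omega)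
          linarith
        · have := mullt 1 3 1 i (by omega) (by omega) (by omega) (by omega) (by omega)
            (by omega) (by omega)
          linarith
      · exfalso
        have := mulle 2 2 i j (by omega) (by omega) (by omega) (by omega) (by omega) (by omega)
        linarith
    · rintro (⟨rfl, rfl⟩ | ⟨rfl, rfl⟩)
      · rfl
      · exact mul_comm _ _
  have ch13B : l 2 * l 2 < l 1 * l 3 →
      ∀ p : ℕ × ℕ, p ∈ Finset.Icc 1 (m+4) ×ˢ Finset.Icc 1 (m+4) →
      (l p.1 * l p.2 = l 2 * l 2 ↔ p ∈ ({(2,2)} : Finset (ℕ × ℕ))) := by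
    rintro hgt ⟨i, j⟩ hp
    rw [Finset.mem_product, Finset.mem_Icc, Finset.mem_Icc] at hp
    obtain ⟨⟨hi1, hiq⟩, hj1, hjq⟩ := hp
    dsimp only
    simp only [Finset.mem_singleton, Prod.mk.injEq]
    constructor
    · intro h
      rcases (show i = 1 ∨ j = 1 ∨ (2 ≤ i ∧ 2 ≤ j) by omega) with rfl | rfl | ⟨h2i, h2j⟩
      · exfalso
        rcases (show j ≤ 2 ∨ 3 ≤ j by omega) with h' | h'
        · have := mullt 1 j 2 2 (by omega) (by omega) (by omega) (by omega) (by omega)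
            (by omega) (by omega)
          linarith
        · have := mulle 1 3 1 j (by omega) (by omega) (by omega) (by omega) (by omega)
            (by omega)
          linarith
      · exfalso
        have hcm := mul_comm (l i) (l 1)
        rcases (show i ≤ 2 ∨ 3 ≤ i by omega) with h' | h'
        · have := mullt 1 i 2 2 (by omega) (by omega) (by omega) (by omega) (by omega)
            (by omega) (by omega)
          linarith
        · have := mulle 1 3 1 i (by omega) (by omega) (by omega) (by omega) (by omega)
            (by omega)
          linarith
      · by_contra hc
        have hcm23 := mul_comm (l 3) (l 2)
        have hlt23 := mullt 2 2 2 3 (by omega) (by omega) (by omega) (by omega) (by omega)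
          (by omega) (by omega)
        rcases (show 3 ≤ i ∨ 3 ≤ j by omega) with h' | h'
        · have := mulle 3 2 i j (by omega) (by omega) (by omega) (by omega) (by omega) (by omega)
          linarith
        · have := mulle 2 3 i j (by omega) (by omega) (by omega) (by omega) (by omega) (by omega)
          linarith
    · rintro ⟨rfl, rfl⟩; rfl
  have ch13C : l 1 * l 3 = l 2 * l 2 →
      ∀ p : ℕ × ℕ, p ∈ Finset.Icc 1 (m+4) ×ˢ Finset.Icc 1 (m+4) →
      (l p.1 * l p.2 = l 1 * l 3 ↔ p ∈ ({(1,3),(3,1),(2,2)} : Finset (ℕ × ℕ))) := by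
    rintro heq ⟨i, j⟩ hp
    rw [Finset.mem_product, Finset.mem_Icc, Finset.mem_Icc] at hp
    obtain ⟨⟨hi1, hiq⟩, hj1, hjq⟩ := hp
    dsimp only
    simp only [Finset.mem_insert, Finset.mem_singleton, Prod.mk.injEq]
    constructor
    · intro h
      rcases (show i = 1 ∨ j = 1 ∨ (2 ≤ i ∧ 2 ≤ j) by omega) with rfl | rfl | ⟨h2i, h2j⟩
      · left; refine ⟨rfl, ?_⟩
        by_contra hc
        rcases (show j ≤ 2 ∨ 4 ≤ j by omega) with h' | h'
        · have := mullt 1 j 1 3 (by omega) (by omega) (by omega) (by omega) (by omega)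
            (by omega) (by omega)
          linarith
        · have := mullt 1 3 1 j (by omega) (by omega) (by omega) (by omega) (by omega)
            (by omega) (by omega)
          linarith
      · right; left; refine ⟨?_, rfl⟩
        by_contra hc
        have hcm := mul_comm (l i) (l 1)
        rcases (show i ≤ 2 ∨ 4 ≤ i by omega) with h' | h'
        · have := mullt 1 i 1 3 (by omega) (by omega) (by omega) (by omega) (by omega)
            (by omega) (by omega)
          linarith
        · have := mullt 1 3 1 i (by omega) (by omega) (by omega) (by omega) (by omega)
            (by omega) (by omega)
          linarith
      · right; right
        by_contra hc
        have hcm23 := mul_comm (l 3) (l 2)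
        have hlt23 := mullt 2 2 2 3 (by omega) (by omega) (by omega) (by omega) (by omega)
          (by omega) (by omega)
        rcases (show 3 ≤ i ∨ 3 ≤ j by omega) with h' | h'
        · have := mulle 3 2 i j (by omega) (by omega) (by omega) (by omega) (by omega) (by omega)
          linarith
        · have := mulle 2 3 i j (by omega) (by omega) (by omega) (by omega) (by omega) (by omega)
          linarith
    · rintro (⟨rfl, rfl⟩ | ⟨rfl, rfl⟩ | ⟨rfl, rfl⟩)
      · rfl
      · exact mul_comm _ _
      · exact heq.symm
  -- top third atom characterizations
  have chTA : l (m+3) * l (m+3) < l (m+2) * l (m+4) →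
      ∀ p : ℕ × ℕ, p ∈ Finset.Icc 1 (m+4) ×ˢ Finset.Icc 1 (m+4) →
      (l p.1 * l p.2 = l (m+2) * l (m+4) ↔
        p ∈ ({(m+2, m+4), (m+4, m+2)} : Finset (ℕ × ℕ))) := by
    rintro hlt ⟨i, j⟩ hp
    rw [Finset.mem_product, Finset.mem_Icc, Finset.mem_Icc] at hp
    obtain ⟨⟨hi1, hiq⟩, hj1, hjq⟩ := hp
    dsimp only
    simp only [Finset.mem_insert, Finset.mem_singleton, Prod.mk.injEq]
    constructor
    · intro h
      rcases (show j = m+4 ∨ i = m+4 ∨ (i ≤ m+3 ∧ j ≤ m+3) by omega) with rfl | rfl | ⟨h3i, h3j⟩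
      · left; refine ⟨?_, rfl⟩
        by_contra hc
        rcases (show i ≤ m+1 ∨ m+3 ≤ i by omega) with h' | h'
        · have := mullt i (m+4) (m+2) (m+4) (by omega) (by omega) (by omega) (by omega)
            (by omega) (by omega) (by omega)
          linarith
        · have := mullt (m+2) (m+4) i (m+4) (by omega) (by omega) (by omega) (by omega)
            (by omega) (by omega) (by omega)
          linarith
      · right; refine ⟨rfl, ?_⟩
        by_contra hc
        have hcm := mul_comm (l (m+4)) (l j)
        rcases (show j ≤ m+1 ∨ m+3 ≤ j by omega) with h' | h'
        · have := mullt j (m+4) (m+2) (m+4) (by omega) (by omega) (by omega) (by omega)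
            (by omega) (by omega) (by omega)
          linarith
        · have := mullt (m+2) (m+4) j (m+4) (by omega) (by omega) (by omega) (by omega)
            (by omega) (by omega) (by omega)
          linarith
      · exfalso
        have := mulle i j (m+3) (m+3) (by omega) (by omega) (by omega) (by omega) (by omega)
          (by omega)
        linarith
    · rintro (⟨rfl, rfl⟩ | ⟨rfl, rfl⟩)
      · rfl
      · exact mul_comm _ _
  have chTB : l (m+2) * l (m+4) < l (m+3) * l (m+3) →
      ∀ p : ℕ × ℕ, p ∈ Finset.Icc 1 (m+4) ×ˢ Finset.Icc 1 (m+4) →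
      (l p.1 * l p.2 = l (m+3) * l (m+3) ↔
        p ∈ ({(m+3, m+3)} : Finset (ℕ × ℕ))) := by
    rintro hgt ⟨i, j⟩ hp
    rw [Finset.mem_product, Finset.mem_Icc, Finset.mem_Icc] at hp
    obtain ⟨⟨hi1, hiq⟩, hj1, hjq⟩ := hp
    dsimp only
    simp only [Finset.mem_singleton, Prod.mk.injEq]
    constructor
    · intro h
      have hlt34 := mullt (m+3) (m+3) (m+3) (m+4) (by omega) (by omega) (by omega) (by omega)
        (by omega) (by omega) (by omega)
      rcases (show j = m+4 ∨ i = m+4 ∨ (i ≤ m+3 ∧ j ≤ m+3) by omega) with rfl | rfl | ⟨h3i, h3j⟩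
      · exfalso
        rcases (show i ≤ m+2 ∨ m+3 ≤ i by omega) with h' | h'
        · have := mulle i (m+4) (m+2) (m+4) (by omega) (by omega) (by omega) (by omega)
            (by omega) (by omega)
          linarith
        · have := mulle (m+3) (m+4) i (m+4) (by omega) (by omega) (by omega) (by omega)
            (by omega) (by omega)
          linarith
      · exfalso
        have hcm := mul_comm (l (m+4)) (l j)
        rcases (show j ≤ m+2 ∨ m+3 ≤ j by omega) with h' | h'
        · have := mulle j (m+4) (m+2) (m+4) (by omega) (by omega) (by omega) (by omega)
            (by omega) (by omega)
          linarith
        · have := mulle (m+3) (m+4) j (m+4) (by omega) (by omega) (by omega) (by omega)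
            (by omega) (by omega)
          linarith
      · by_contra hc
        rcases (show i ≤ m+2 ∨ j ≤ m+2 by omega) with h' | h'
        · have := mulle i j (m+2) (m+3) (by omega) (by omega) (by omega) (by omega)
            (by omega) (by omega)
          have := mullt (m+2) (m+3) (m+3) (m+3) (by omega) (by omega) (by omega) (by omega)
            (by omega) (by omega) (by omega)
          linarith
        · have := mulle i j (m+3) (m+2) (by omega) (by omega) (by omega) (by omega)
            (by omega) (by omega)
          have := mullt (m+3) (m+2) (m+3) (m+3) (by omega) (by omega) (by omega) (by omega)
            (by omega) (by omega) (by omega)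
          linarith
    · rintro ⟨rfl, rfl⟩; rfl
  have chTC : l (m+2) * l (m+4) = l (m+3) * l (m+3) →
      ∀ p : ℕ × ℕ, p ∈ Finset.Icc 1 (m+4) ×ˢ Finset.Icc 1 (m+4) →
      (l p.1 * l p.2 = l (m+2) * l (m+4) ↔
        p ∈ ({(m+2, m+4), (m+4, m+2), (m+3, m+3)} : Finset (ℕ × ℕ))) := by
    rintro heq ⟨i, j⟩ hp
    rw [Finset.mem_product, Finset.mem_Icc, Finset.mem_Icc] at hp
    obtain ⟨⟨hi1, hiq⟩, hj1, hjq⟩ := hp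
    dsimp only
    simp only [Finset.mem_insert, Finset.mem_singleton, Prod.mk.injEq]
    constructor
    · intro h
      rcases (show j = m+4 ∨ i = m+4 ∨ (i ≤ m+3 ∧ j ≤ m+3) by omega) with rfl | rfl | ⟨h3i, h3j⟩
      · left; refine ⟨?_, rfl⟩
        by_contra hc
        rcases (show i ≤ m+1 ∨ m+3 ≤ i by omega) with h' | h'
        · have := mullt i (m+4) (m+2) (m+4) (by omega) (by omega) (by omega) (by omega)
            (by omega) (by omega) (by omega)
          linarith
        · have := mullt (m+2) (m+4) i (m+4) (by omega) (by omega) (by omega) (by omega)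
            (by omega) (by omega) (by omega)
          linarith
      · right; left; refine ⟨rfl, ?_⟩
        by_contra hc
        have hcm := mul_comm (l (m+4)) (l j)
        rcases (show j ≤ m+1 ∨ m+3 ≤ j by omega) with h' | h'
        · have := mullt j (m+4) (m+2) (m+4) (by omega) (by omega) (by omega) (by omega)
            (by omega) (by omega) (by omega)
          linarith
        · have := mullt (m+2) (m+4) j (m+4) (by omega) (by omega) (by omega) (by omega)
            (by omega) (by omega) (by omega)
          linarith
      · right; right
        by_contra hc
        rcases (show i ≤ m+2 ∨ j ≤ m+2 by omega) with h' | h'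
        · have := mulle i j (m+2) (m+3) (by omega) (by omega) (by omega) (by omega)
            (by omega) (by omega)
          have := mullt (m+2) (m+3) (m+3) (m+3) (by omega) (by omega) (by omega) (by omega)
            (by omega) (by omega) (by omega)
          linarith
        · have := mulle i j (m+3) (m+2) (by omega) (by omega) (by omega) (by omega)
            (by omega) (by omega)
          have := mullt (m+3) (m+2) (m+3) (m+3) (by omega) (by omega) (by omega) (by omega)
            (by omega) (by omega) (by omega)
          linarith
    · rintro (⟨rfl, rfl⟩ | ⟨rfl, rfl⟩ | ⟨rfl, rfl⟩)
      · rfl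
      · exact mul_comm _ _
      · exact heq.symm
  -- subset helpers
  have mem2 : ∀ i j : ℕ, 1 ≤ i → i ≤ m+4 → 1 ≤ j → j ≤ m+4 →
      (i, j) ∈ Finset.Icc 1 (m+4) ×ˢ Finset.Icc 1 (m+4) := by
    intro i j a1 a2 a3 a4
    exact Finset.mem_product.2 ⟨Finset.mem_Icc.2 ⟨a1, a2⟩, Finset.mem_Icc.2 ⟨a3, a4⟩⟩
  -- the four extreme coefficients
  have nz1 : (ν * ν).coeff (l 1 * l 1) ≠ 0 := by
    rw [EV1 _ _ ch11 (by
      intro p hp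
      simp only [Finset.mem_singleton] at hp
      subst hp; exact mem2 1 1 (by omega) (by omega) (by omega) (by omega)),
      Finset.sum_singleton]
    exact mul_ne_zero (hb 1 (by omega) (by omega)) (hb 1 (by omega) (by omega))
  have nz2 : (ν * ν).coeff (l 1 * l 2) ≠ 0 := by
    rw [EV1 _ _ ch12 (by
      intro p hp
      simp only [Finset.mem_insert, Finset.mem_singleton] at hp
      rcases hp with rfl | rfl
      · exact mem2 1 2 (by omega) (by omega) (by omega) (by omega)
      · exact mem2 2 1 (by omega) (by omega) (by omega) (by omega)),
      Finset.sum_pair (by decide)]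
    have hbb := mul_ne_zero (hb 1 (by omega) (by omega)) (hb 2 (by omega) (by omega))
    intro h0
    apply hbb
    have := mul_comm (b 2) (b 1)
    dsimp only at h0
    linarith
  have nz5 : (ν * ν).coeff (l (m+3) * l (m+4)) ≠ 0 := by
    rw [EV1 _ _ ch56 (by
      intro p hp
      simp only [Finset.mem_insert, Finset.mem_singleton] at hp
      rcases hp with rfl | rfl
      · exact mem2 (m+3) (m+4) (by omega) (by omega) (by omega) (by omega)
      · exact mem2 (m+4) (m+3) (by omega) (by omega) (by omega) (by omega)),
      Finset.sum_pair (by simp only [ne_eq, Prod.mk.injEq, not_and]; omega)]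
    have hbb := mul_ne_zero (hb (m+3) (by omega) (by omega)) (hb (m+4) (by omega) (by omega))
    intro h0
    apply hbb
    have := mul_comm (b (m+4)) (b (m+3))
    dsimp only at h0
    linarith
  have nz6 : (ν * ν).coeff (l (m+4) * l (m+4)) ≠ 0 := by
    rw [EV1 _ _ ch66 (by
      intro p hp
      simp only [Finset.mem_singleton] at hp
      subst hp; exact mem2 (m+4) (m+4) (by omega) (by omega) (by omega) (by omega)),
      Finset.sum_singleton]
    exact mul_ne_zero (hb (m+4) (by omega) (by omega)) (hb (m+4) (by omega) (by omega))
  -- third smallest atom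
  have H3 : ∃ C : ℝ, l 1 * l 2 < C ∧ C ≤ l 2 * l 2 ∧ (ν * ν).coeff C ≠ 0 := by
    have hB2 : l 1 * l 2 < l 2 * l 2 :=
      mullt 1 2 2 2 (by omega) (by omega) (by omega) (by omega) (by omega) (by omega) (by omega)
    have hB3 : l 1 * l 2 < l 1 * l 3 :=
      mullt 1 2 1 3 (by omega) (by omega) (by omega) (by omega) (by omega) (by omega) (by omega)
    rcases lt_trichotomy (l 1 * l 3) (l 2 * l 2) with hlt | heq | hgt
    · refine ⟨l 1 * l 3, hB3, hlt.le, ?_⟩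
      rw [EV1 _ _ (ch13A hlt) (by
        intro p hp
        simp only [Finset.mem_insert, Finset.mem_singleton] at hp
        rcases hp with rfl | rfl
        · exact mem2 1 3 (by omega) (by omega) (by omega) (by omega)
        · exact mem2 3 1 (by omega) (by omega) (by omega) (by omega)),
        Finset.sum_pair (by decide)]
      have hbb := mul_ne_zero (hb 1 (by omega) (by omega)) (hb 3 (by omega) (by omega))
      intro h0
      apply hbb
      have := mul_comm (b 3) (b 1)
      dsimp only at h0
      linarith
    · have hsub : ({(1,3),(3,1),(2,2)} : Finset (ℕ × ℕ)) ⊆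
          Finset.Icc 1 (m+4) ×ˢ Finset.Icc 1 (m+4) := by
        intro p hp
        simp only [Finset.mem_insert, Finset.mem_singleton] at hp
        rcases hp with rfl | rfl | rfl
        · exact mem2 1 3 (by omega) (by omega) (by omega) (by omega)
        · exact mem2 3 1 (by omega) (by omega) (by omega) (by omega)
        · exact mem2 2 2 (by omega) (by omega) (by omega) (by omega)
      refine ⟨l 1 * l 3, hB3, heq.le, ?_⟩
      rw [EV1 _ _ (ch13C heq) hsub, Finset.sum_insert (by decide),
        Finset.sum_pair (by decide)]
      intro h0
      have hd0 := hpos2 (l 1 * l 3)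
      rw [EV2 _ _ (ch13C heq) hsub, Finset.sum_insert (by decide),
        Finset.sum_pair (by decide)] at hd0
      dsimp only at h0 hd0
      have m1 : l 1 < l 2 := hmono 1 2 (by omega) (by omega) (by omega)
      have m2 : l 2 < l 3 := hmono 2 3 (by omega) (by omega) (by omega)
      have p2 : 0 < l 2 := hp 2 (by omega) (by omega)
      have hb2 : 0 < b 2 * b 2 := mul_self_pos.2 (hb 2 (by omega) (by omega))
      have key2 : 2 * l 2 < l 1 + l 3 := by nlinarith [mul_pos (sub_pos.2 m2) (sub_pos.2 m1)]
      have hb13 : b 1 * b 3 = -(b 2 * b 2) / 2 := by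
        have := mul_comm (b 3) (b 1)
        linarith
      have hrw : b 1 * (l 3 * b 3) + b 3 * (l 1 * b 1) + b 2 * (l 2 * b 2)
          = (b 1 * b 3) * (l 1 + l 3) + (b 2 * b 2) * l 2 := by ring
      have hd1 : 0 ≤ -(b 2 * b 2) / 2 * (l 1 + l 3) + b 2 * b 2 * l 2 := by
        have e : -(b 2 * b 2) / 2 * (l 1 + l 3) + b 2 * b 2 * l 2
            = b 1 * (l 3 * b 3) + (b 3 * (l 1 * b 1) + b 2 * (l 2 * b 2)) := by
          rw [← hb13]; ring
        rw [e]; exact hd0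
      have final : 0 < (b 2 * b 2) * (l 1 + l 3 - 2 * l 2) := mul_pos hb2 (by linarith)
      nlinarith [hd1, final]
    · refine ⟨l 2 * l 2, hB2, le_rfl, ?_⟩
      rw [EV1 _ _ (ch13B hgt) (by
        intro p hp
        simp only [Finset.mem_singleton] at hp
        subst hp; exact mem2 2 2 (by omega) (by omega) (by omega) (by omega)),
        Finset.sum_singleton]
      exact mul_ne_zero (hb 2 (by omega) (by omega)) (hb 2 (by omega) (by omega))
  -- third largest atom
  have H4 : ∃ D : ℝ, l (m+3) * l (m+3) ≤ D ∧ D < l (m+3) * l (m+4) ∧ (ν * ν).coeff D ≠ 0 := by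
    have hT2 : l (m+3) * l (m+3) < l (m+3) * l (m+4) :=
      mullt (m+3) (m+3) (m+3) (m+4) (by omega) (by omega) (by omega) (by omega) (by omega)
        (by omega) (by omega)
    have hT3 : l (m+2) * l (m+4) < l (m+3) * l (m+4) :=
      mullt (m+2) (m+4) (m+3) (m+4) (by omega) (by omega) (by omega) (by omega) (by omega)
        (by omega) (by omega)
    rcases lt_trichotomy (l (m+2) * l (m+4)) (l (m+3) * l (m+3)) with hlt | heq | hgt
    · refine ⟨l (m+3) * l (m+3), le_rfl, hT2, ?_⟩
      rw [EV1 _ _ (chTB hlt) (by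
        intro p hp
        simp only [Finset.mem_singleton] at hp
        subst hp; exact mem2 (m+3) (m+3) (by omega) (by omega) (by omega) (by omega)),
        Finset.sum_singleton]
      exact mul_ne_zero (hb (m+3) (by omega) (by omega)) (hb (m+3) (by omega) (by omega))
    · have hsub : ({(m+2, m+4), (m+4, m+2), (m+3, m+3)} : Finset (ℕ × ℕ)) ⊆
          Finset.Icc 1 (m+4) ×ˢ Finset.Icc 1 (m+4) := by
        intro p hp
        simp only [Finset.mem_insert, Finset.mem_singleton] at hp
        rcases hp with rfl | rfl | rfl
        · exact mem2 (m+2) (m+4) (by omega) (by omega) (by omega) (by omega)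
        · exact mem2 (m+4) (m+2) (by omega) (by omega) (by omega) (by omega)
        · exact mem2 (m+3) (m+3) (by omega) (by omega) (by omega) (by omega)
      refine ⟨l (m+2) * l (m+4), heq.ge, hT3, ?_⟩
      have hne1 : ((m+2 : ℕ), (m+4 : ℕ)) ∉ ({(m+4, m+2), (m+3, m+3)} : Finset (ℕ × ℕ)) := by
        simp only [Finset.mem_insert, Finset.mem_singleton, Prod.mk.injEq, not_or, not_and]
        omega
      have hne2 : ((m+4 : ℕ), (m+2 : ℕ)) ≠ ((m+3 : ℕ), (m+3 : ℕ)) := by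
        simp only [ne_eq, Prod.mk.injEq, not_and]; omega
      rw [EV1 _ _ (chTC heq) hsub, Finset.sum_insert hne1, Finset.sum_pair hne2]
      intro h0
      have hd0 := hpos2 (l (m+2) * l (m+4))
      rw [EV2 _ _ (chTC heq) hsub, Finset.sum_insert hne1, Finset.sum_pair hne2] at hd0
      dsimp only at h0 hd0
      have m1 : l (m+2) < l (m+3) := hmono (m+2) (m+3) (by omega) (by omega) (by omega)
      have m2 : l (m+3) < l (m+4) := hmono (m+3) (m+4) (by omega) (by omega) (by omega)
      have p2 : 0 < l (m+3) := hp (m+3) (by omega) (by omega)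
      have hb2 : 0 < b (m+3) * b (m+3) := mul_self_pos.2 (hb (m+3) (by omega) (by omega))
      have key2 : 2 * l (m+3) < l (m+2) + l (m+4) := by
        nlinarith [mul_pos (sub_pos.2 m2) (sub_pos.2 m1)]
      have hb13 : b (m+2) * b (m+4) = -(b (m+3) * b (m+3)) / 2 := by
        have := mul_comm (b (m+4)) (b (m+2))
        linarith
      have hrw : b (m+2) * (l (m+4) * b (m+4)) + b (m+4) * (l (m+2) * b (m+2))
            + b (m+3) * (l (m+3) * b (m+3))
          = (b (m+2) * b (m+4)) * (l (m+2) + l (m+4)) + (b (m+3) * b (m+3)) * l (m+3) := by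
        ring
      have hd1 : 0 ≤ -(b (m+3) * b (m+3)) / 2 * (l (m+2) + l (m+4))
          + b (m+3) * b (m+3) * l (m+3) := by
        have e : -(b (m+3) * b (m+3)) / 2 * (l (m+2) + l (m+4)) + b (m+3) * b (m+3) * l (m+3)
            = b (m+2) * (l (m+4) * b (m+4)) + (b (m+4) * (l (m+2) * b (m+2))
              + b (m+3) * (l (m+3) * b (m+3))) := by
          rw [← hb13]; ring
        rw [e]; exact hd0
      have final : 0 < (b (m+3) * b (m+3)) * (l (m+2) + l (m+4) - 2 * l (m+3)) :=
        mul_pos hb2 (by linarith)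
      nlinarith [hd1, final]
    · refine ⟨l (m+2) * l (m+4), hgt.le, hT3, ?_⟩
      rw [EV1 _ _ (chTA hgt) (by
          intro p hp
          simp only [Finset.mem_insert, Finset.mem_singleton] at hp
          rcases hp with rfl | rfl
          · exact mem2 (m+2) (m+4) (by omega) (by omega) (by omega) (by omega)
          · exact mem2 (m+4) (m+2) (by omega) (by omega) (by omega) (by omega)),
          Finset.sum_pair (by simp only [ne_eq, Prod.mk.injEq, not_and]; omega)]
      have hbb := mul_ne_zero (hb (m+2) (by omega) (by omega)) (hb (m+4) (by omega) (by omega))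
      intro h0
      apply hbb
      have := mul_comm (b (m+4)) (b (m+2))
      dsimp only at h0
      linarith
  -- assemble
  obtain ⟨C, hBC, hC2, nzC⟩ := H3
  obtain ⟨D, hD2, hDE, nzD⟩ := H4
  have o1 : l 1 * l 1 < l 1 * l 2 :=
    mullt 1 1 1 2 (by omega) (by omega) (by omega) (by omega) (by omega) (by omega) (by omega)
  have o3 : C < D := by
    have := mullt 2 2 (m+3) (m+3) (by omega) (by omega) (by omega) (by omega) (by omega)
      (by omega) (by omega)
    linarith
  have o5 : l (m+3) * l (m+4) < l (m+4) * l (m+4) :=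
    mullt (m+3) (m+4) (m+4) (m+4) (by omega) (by omega) (by omega) (by omega) (by omega)
      (by omega) (by omega)
  have hsubT : ({l 1 * l 1, l 1 * l 2, C, D, l (m+3) * l (m+4), l (m+4) * l (m+4)} : Finset ℝ)
      ⊆ (ν * ν).coeff.support := by
    intro x hx
    simp only [Finset.mem_insert, Finset.mem_singleton] at hx
    rcases hx with rfl | rfl | rfl | rfl | rfl | rfl
    · exact Finsupp.mem_support_iff.2 nz1
    · exact Finsupp.mem_support_iff.2 nz2
    · exact Finsupp.mem_support_iff.2 nzC
    · exact Finsupp.mem_support_iff.2 nzD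
    · exact Finsupp.mem_support_iff.2 nz5
    · exact Finsupp.mem_support_iff.2 nz6
  have hcardT : ({l 1 * l 1, l 1 * l 2, C, D, l (m+3) * l (m+4), l (m+4) * l (m+4)}
      : Finset ℝ).card = 6 := by
    rw [Finset.card_insert_of_notMem (by
      simp only [Finset.mem_insert, Finset.mem_singleton]
      push_neg
      exact ⟨ne_of_lt (by linarith), ne_of_lt (by linarith), ne_of_lt (by linarith),
        ne_of_lt (by linarith), ne_of_lt (by linarith)⟩)]
    rw [Finset.card_insert_of_notMem (by
      simp only [Finset.mem_insert, Finset.mem_singleton]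
      push_neg
      exact ⟨ne_of_lt (by linarith), ne_of_lt (by linarith), ne_of_lt (by linarith),
        ne_of_lt (by linarith)⟩)]
    rw [Finset.card_insert_of_notMem (by
      simp only [Finset.mem_insert, Finset.mem_singleton]
      push_neg
      exact ⟨ne_of_lt (by linarith), ne_of_lt (by linarith), ne_of_lt (by linarith)⟩)]
    rw [Finset.card_insert_of_notMem (by
      simp only [Finset.mem_insert, Finset.mem_singleton]
      push_neg
      exact ⟨ne_of_lt (by linarith), ne_of_lt (by linarith)⟩)]
    rw [Finset.card_insert_of_notMem (by
      simp only [Finset.mem_singleton]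
      exact ne_of_lt (by linarith))]
    rw [Finset.card_singleton]
  calc (6 : ℕ) = _ := hcardT.symm
    _ ≤ (ν * ν).coeff.support.card := Finset.card_le_card hsubT
end

section
/- Let ν = Σ_{k=1}^q b_k δ_{λ_k} be a real charge with distinct atoms λ_k ≥ 1 and nonzero coefficients, such that ν*ν and ν*(tν) are both positive measures. If λ_k² = λ_i λ_j with λ_i < λ_k < λ_j and the set of pairs representing λ_k² as a product of two atoms is exactly {(k,k),(i,j),(j,i)}, then the coefficient b_k² + 2b_i b_j of δ_{λ_k²} in ν*ν is strictly positive. -/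
open MeasureTheory MonoidAlgebra Finset

lemma tCharge_apply (ξ : MonoidAlgebra ℝ ℝ) (t : ℝ) : (tCharge ξ).coeff t = t * ξ.coeff t := by
  rw [tCharge, MonoidAlgebra.coeff_finsuppSum, Finsupp.sum_apply]
  rw [Finsupp.sum]
  have : ∀ x ∈ ξ.coeff.support, (MonoidAlgebra.single x (x * ξ.coeff x)).coeff t
      = if x = t then x * ξ.coeff x else 0 := fun x _ => MonoidAlgebra.coeff_single_apply
  rw [Finset.sum_congr rfl this, Finset.sum_ite_eq' ξ.coeff.support t (fun x => x * ξ.coeff x)]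
  split_ifs with h
  · rfl
  · rw [Finsupp.notMem_support_iff.mp h, mul_zero]

lemma tCharge_sum (q : ℕ) (l b : ℕ → ℝ) :
    tCharge (∑ c ∈ Finset.Icc 1 q, MonoidAlgebra.single (l c) (b c))
      = ∑ c ∈ Finset.Icc 1 q, MonoidAlgebra.single (l c) (l c * b c) := by
  ext t
  rw [tCharge_apply]
  rw [MonoidAlgebra.coeff_sum, MonoidAlgebra.coeff_sum, Finsupp.finset_sum_apply, Finsupp.finset_sum_apply, Finset.mul_sum]
  refine Finset.sum_congr rfl fun c _ => ?_
  rw [MonoidAlgebra.coeff_single_apply, MonoidAlgebra.coeff_single_apply]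
  split_ifs with h
  · rw [h]
  · rw [mul_zero]

lemma key_coeff (q : ℕ) (l b f : ℕ → ℝ) (i k j : ℕ)
    (hik : i ≠ k) (hkj : k ≠ j) (hij : i ≠ j)
    (hi : i ∈ Finset.Icc 1 q) (hk : k ∈ Finset.Icc 1 q) (hj : j ∈ Finset.Icc 1 q)
    (hkk : l k * l k = l k ^ 2)
    (hij1 : l i * l j = l k ^ 2) (hij2 : l j * l i = l k ^ 2)
    (hrep : ∀ a c, a ∈ Finset.Icc 1 q → c ∈ Finset.Icc 1 q → l a * l c = l k ^ 2 →
      (a = k ∧ c = k) ∨ (a = i ∧ c = j) ∨ (a = j ∧ c = i)) :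
    ((∑ a ∈ Finset.Icc 1 q, MonoidAlgebra.single (l a) (b a)) *
      (∑ c ∈ Finset.Icc 1 q, MonoidAlgebra.single (l c) (f c))).coeff (l k ^ 2)
      = b k * f k + b i * f j + b j * f i := by
  have hmain : ((∑ a ∈ Finset.Icc 1 q, MonoidAlgebra.single (l a) (b a)) *
      (∑ c ∈ Finset.Icc 1 q, MonoidAlgebra.single (l c) (f c))).coeff (l k ^ 2)
      = ∑ a ∈ Finset.Icc 1 q, ∑ c ∈ Finset.Icc 1 q,
          (if l a * l c = l k ^ 2 then b a * f c else 0) := by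
    rw [Finset.sum_mul_sum]
    simp only [MonoidAlgebra.single_mul_single]
    rw [MonoidAlgebra.coeff_sum, Finsupp.finset_sum_apply]
    refine Finset.sum_congr rfl fun a _ => ?_
    rw [MonoidAlgebra.coeff_sum, Finsupp.finset_sum_apply]
    refine Finset.sum_congr rfl fun c _ => ?_
    rw [MonoidAlgebra.coeff_single_apply]
  rw [hmain, ← Finset.sum_product']
  have hsub : ({(k,k), (i,j), (j,i)} : Finset (ℕ × ℕ)) ⊆ Finset.Icc 1 q ×ˢ Finset.Icc 1 q := by
    intro p hp
    simp only [Finset.mem_insert, Finset.mem_singleton] at hp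
    rcases hp with h | h | h <;> subst h <;> simp [Finset.mem_product, *]
  rw [← Finset.sum_subset hsub]
  · have h1 : ((k,k) : ℕ × ℕ) ∉ ({(i,j),(j,i)} : Finset (ℕ × ℕ)) := by
      simp [Prod.ext_iff]
      exact ⟨fun h => absurd h.symm hik, fun h => absurd h hkj⟩
    have h2 : ((i,j) : ℕ × ℕ) ∉ ({(j,i)} : Finset (ℕ × ℕ)) := by
      simp [Prod.ext_iff]
      intro h; exact absurd h hij
    rw [show ({(k,k), (i,j), (j,i)} : Finset (ℕ × ℕ)) = insert (k,k) (insert (i,j) {(j,i)}) from rfl,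
      Finset.sum_insert h1, Finset.sum_insert h2, Finset.sum_singleton]
    simp only [if_pos hkk, if_pos hij1, if_pos hij2]
    ring
  · intro p hp hnp
    simp only [Finset.mem_product] at hp
    rw [if_neg]
    intro h
    rcases hrep p.1 p.2 hp.1 hp.2 h with ⟨h1, h2⟩ | ⟨h1, h2⟩ | ⟨h1, h2⟩ <;>
      exact hnp (by simp [Finset.mem_insert, Prod.ext_iff, h1, h2])

/-- If λ_k² = λ_i λ_j is represented only by the pairs (k,k), (i,j), (j,i), then the
coefficient of δ_{λ_k²} in ν*ν is strictly positive. -/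
theorem card_three_coeff_pos (q : ℕ) (l b : ℕ → ℝ) (ν : MonoidAlgebra ℝ ℝ)
    (hν : ν = ∑ k ∈ Finset.Icc 1 q, MonoidAlgebra.single (l k) (b k))
    (hl : ∀ k, 1 ≤ k → k ≤ q → 1 ≤ l k)
    (hinj : ∀ i j, 1 ≤ i → i ≤ q → 1 ≤ j → j ≤ q → l i = l j → i = j)
    (hb : ∀ k, 1 ≤ k → k ≤ q → b k ≠ 0)
    (hpos1 : ∀ t : ℝ, 0 ≤ (ν * ν).coeff t)
    (hpos2 : ∀ t : ℝ, 0 ≤ (ν * tCharge ν).coeff t)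
    (i k j : ℕ) (hi : 1 ≤ i ∧ i ≤ q) (hk : 1 ≤ k ∧ k ≤ q) (hj : 1 ≤ j ∧ j ≤ q)
    (horder : l i < l k ∧ l k < l j) (hprod : l k ^ 2 = l i * l j)
    (hrep : ∀ a c, 1 ≤ a → a ≤ q → 1 ≤ c → c ≤ q → l a * l c = l k ^ 2 →
      (a = k ∧ c = k) ∨ (a = i ∧ c = j) ∨ (a = j ∧ c = i)) :
    0 < b k ^ 2 + 2 * b i * b j := by
  have hik : i ≠ k := fun h => absurd (h ▸ horder.1) (lt_irrefl _)
  have hkj : k ≠ j := fun h => absurd (h ▸ horder.2) (lt_irrefl _)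
  have hij : i ≠ j := fun h => absurd (h ▸ (horder.1.trans horder.2)) (lt_irrefl _)
  have hi' : i ∈ Finset.Icc 1 q := Finset.mem_Icc.mpr hi
  have hk' : k ∈ Finset.Icc 1 q := Finset.mem_Icc.mpr hk
  have hj' : j ∈ Finset.Icc 1 q := Finset.mem_Icc.mpr hj
  have hrep' : ∀ a c, a ∈ Finset.Icc 1 q → c ∈ Finset.Icc 1 q → l a * l c = l k ^ 2 →
      (a = k ∧ c = k) ∨ (a = i ∧ c = j) ∨ (a = j ∧ c = i) := by
    intro a c ha hc h
    rw [Finset.mem_Icc] at ha hc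
    exact hrep a c ha.1 ha.2 hc.1 hc.2 h
  have hkk : l k * l k = l k ^ 2 := by ring
  have hij1 : l i * l j = l k ^ 2 := hprod.symm
  have hij2 : l j * l i = l k ^ 2 := by rw [mul_comm]; exact hprod.symm
  -- coefficient of δ_{λ_k²} in ν*ν
  have hA : 0 ≤ b k * b k + b i * b j + b j * b i := by
    have := hpos1 (l k ^ 2)
    rw [hν, key_coeff q l b b i k j hik hkj hij hi' hk' hj' hkk hij1 hij2 hrep'] at this
    exact this
  -- coefficient of δ_{λ_k²} in ν*(tν)
  have hB : 0 ≤ b k * (l k * b k) + b i * (l j * b j) + b j * (l i * b i) := by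
    have := hpos2 (l k ^ 2)
    rw [hν, tCharge_sum q l b,
      key_coeff q l b (fun c => l c * b c) i k j hik hkj hij hi' hk' hj' hkk hij1 hij2 hrep']
      at this
    exact this
  have hbk2 : 0 < b k ^ 2 := pow_two_pos_of_ne_zero (hb k hk.1 hk.2)
  have hlk : 0 < l k := lt_of_lt_of_le one_pos (hl k hk.1 hk.2)
  -- AM-GM strict: l i + l j > 2 l k
  have h2 : 2 * l k < l i + l j := by
    have hgt : 0 < (l j - l k) * (l k - l i) :=
      mul_pos (sub_pos.mpr horder.2) (sub_pos.mpr horder.1)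
    nlinarith [hgt, hlk, hprod]
  by_contra hcon
  push_neg at hcon
  have hp : b i * b j = -(b k ^ 2) / 2 := by nlinarith [hA, hcon]
  have hB' : 0 ≤ l k * b k ^ 2 + (l i + l j) * (b i * b j) := by nlinarith [hB]
  rw [hp] at hB'
  nlinarith [hB', hbk2, h2, mul_pos hbk2 (by linarith : (0:ℝ) < l i + l j - 2 * l k)]
end

section
/- Let ν = b₁δ_{λ} + b₂δ_{λ²} + b₃δ_{λ³} + b₄δ_{λ⁴} be a 4-atomic real charge with atoms in geometric progression, λ > 1 and all b_k ≠ 0. If ν*ν is a positive measure, then b₁, b₂, b₃, b₄ all have the same sign. -/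
open MeasureTheory MonoidAlgebra Finset

theorem MA.addApply (f g : MonoidAlgebra ℝ ℝ) (a : ℝ) : (f + g).coeff a = f.coeff a + g.coeff a :=
  Finsupp.add_apply f.coeff g.coeff a

theorem MA.sApply (a b : ℝ) (x : ℝ) :
    (MonoidAlgebra.single a x : MonoidAlgebra ℝ ℝ).coeff b = if a = b then x else 0 := by
  classical exact Finsupp.single_apply

/-- A 4-atomic charge with atoms in geometric progression whose multiplicative square
is positive has coefficients of constant sign. -/
theorem four_atomic_geometric_constant_sign (l b₁ b₂ b₃ b₄ : ℝ) (hl : 1 < l)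
    (ν : MonoidAlgebra ℝ ℝ)
    (hν : ν = MonoidAlgebra.single l b₁ + MonoidAlgebra.single (l ^ 2) b₂ +
      MonoidAlgebra.single (l ^ 3) b₃ + MonoidAlgebra.single (l ^ 4) b₄)
    (hb₁ : b₁ ≠ 0) (hb₂ : b₂ ≠ 0) (hb₃ : b₃ ≠ 0) (hb₄ : b₄ ≠ 0)
    (hpos : ∀ t : ℝ, 0 ≤ (ν * ν).coeff t) :
    (0 < b₁ ∧ 0 < b₂ ∧ 0 < b₃ ∧ 0 < b₄) ∨ (b₁ < 0 ∧ b₂ < 0 ∧ b₃ < 0 ∧ b₄ < 0) := by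
  have hmono : StrictMono (fun n : ℕ => l ^ n) := fun a b hab => pow_lt_pow_right₀ hl hab
  have hinj : ∀ i j : ℕ, l ^ i = l ^ j ↔ i = j := fun i j =>
    ⟨fun h => hmono.injective h, fun h => by rw [h]⟩
  have hν' : ν = MonoidAlgebra.single (l ^ 1) b₁ + MonoidAlgebra.single (l ^ 2) b₂ +
      MonoidAlgebra.single (l ^ 3) b₃ + MonoidAlgebra.single (l ^ 4) b₄ := by
    rw [hν, pow_one]
  have h3 := hpos (l ^ 3)
  have h5 := hpos (l ^ 5)
  have h7 := hpos (l ^ 7)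
  rw [hν'] at h3 h5 h7
  simp only [mul_add, add_mul, MonoidAlgebra.single_mul_single, ← pow_add,
    MA.addApply, MA.sApply, hinj] at h3 h5 h7
  norm_num at h3 h5 h7
  rcases lt_or_gt_of_ne hb₁ with h1 | h1 <;>
    rcases lt_or_gt_of_ne hb₂ with h2 | h2 <;>
      rcases lt_or_gt_of_ne hb₃ with h3' | h3' <;>
        rcases lt_or_gt_of_ne hb₄ with h4 | h4 <;>
          first
            | exact Or.inl ⟨h1, h2, h3', h4⟩
            | exact Or.inr ⟨h1, h2, h3', h4⟩
            | nlinarith [h3, h5, h7]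
end

section
/- Let λ > 1, 0 < x < 1/2, and suppose x ≤ λ/(1+λ²). Define the 5-atomic charge ξ = δ_λ + δ_{λ²} - x δ_{λ³} + δ_{λ⁴} + δ_{λ⁵}. Then: (a) μ := ξ*ξ is a positive measure with exactly 9 atoms; (b) ξ*(tξ) is a positive measure (hence μ*(tμ) = (ξ*tξ)*(ξ*tξ) has a positive square root); (c) μ has no positive square root, i.e., there is no finitely atomic positive measure η on (0,∞) with η*η = μ. -/
open MeasureTheory MonoidAlgebra Finset

lemma ma_add_apply (f g : MonoidAlgebra ℝ ℝ) (t : ℝ) : (f + g).coeff t = f.coeff t + g.coeff t :=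
  Finsupp.add_apply f.coeff g.coeff t

lemma ma_sub_apply (f g : MonoidAlgebra ℝ ℝ) (t : ℝ) : (f - g).coeff t = f.coeff t - g.coeff t :=
  Finsupp.sub_apply f.coeff g.coeff t

lemma ma_single_nonneg_apply {a c : ℝ} (t : ℝ) (hc : 0 ≤ c) :
    0 ≤ (MonoidAlgebra.single a c : MonoidAlgebra ℝ ℝ).coeff t := by
  classical
  rw [MonoidAlgebra.coeff_single_apply]
  split <;> simp [hc]

/-- No zero divisors among charges supported on positive reals. -/
lemma ma_no_zero_div (f g : MonoidAlgebra ℝ ℝ) (hf : ∀ s ∈ f.coeff.support, (0:ℝ) < s)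
    (hg : ∀ s ∈ g.coeff.support, (0:ℝ) < s) (hf0 : f ≠ 0) (hg0 : g ≠ 0) : f * g ≠ 0 := by
  classical
  have hfs : f.coeff.support.Nonempty := Finsupp.support_nonempty_iff.mpr (mt MonoidAlgebra.coeff_eq_zero.mp hf0)
  have hgs : g.coeff.support.Nonempty := Finsupp.support_nonempty_iff.mpr (mt MonoidAlgebra.coeff_eq_zero.mp hg0)
  set a := f.coeff.support.max' hfs with ha'
  set b := g.coeff.support.max' hgs with hb'
  have ha : a ∈ f.coeff.support := Finset.max'_mem _ hfs
  have hb : b ∈ g.coeff.support := Finset.max'_mem _ hgs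
  have hval : (f * g).coeff (a * b) = f.coeff a * g.coeff b := by
    rw [MonoidAlgebra.mul_apply, Finsupp.sum]
    rw [Finset.sum_eq_single a]
    · rw [Finsupp.sum, Finset.sum_eq_single b]
      · simp
      · intro t ht htb
        have : a * t ≠ a * b := fun h =>
          htb (mul_left_cancel₀ (ne_of_gt (hf a ha)) h)
        simp [this]
      · intro h; exact absurd hb h
    · intro s hs hsa
      apply Finset.sum_eq_zero
      intro t ht
      have hsle : s ≤ a := Finset.le_max' _ s hs
      have htle : t ≤ b := Finset.le_max' _ t ht
      have hslt : s < a := lt_of_le_of_ne hsle hsa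
      have htpos := hg t ht
      have hapos := hf a ha
      have : s * t ≠ a * b := by nlinarith
      simp [this]
    · intro h; exact absurd ha h
  intro h
  rw [h] at hval
  simp at hval
  rcases hval with h1 | h1
  · exact absurd h1 (Finsupp.mem_support_iff.mp ha)
  · exact absurd h1 (Finsupp.mem_support_iff.mp hb)

set_option maxHeartbeats 2000000 in
/-- The counterexample family: μ = ξ*ξ is a positive 9-atomic measure, ξ*(tξ) is
positive, but μ has no positive square root under multiplicative convolution. -/
theorem counterexample_family (l x : ℝ) (hl : 1 < l) (hx0 : 0 < x) (hx1 : x < 1 / 2)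
    (hxl : x ≤ l / (1 + l ^ 2)) (ξ μ : MonoidAlgebra ℝ ℝ)
    (hξ : ξ = MonoidAlgebra.single l 1 + MonoidAlgebra.single (l ^ 2) 1 +
      MonoidAlgebra.single (l ^ 3) (-x) + MonoidAlgebra.single (l ^ 4) 1 +
      MonoidAlgebra.single (l ^ 5) 1)
    (hμ : μ = ξ * ξ) :
    ((∀ t : ℝ, 0 ≤ μ.coeff t) ∧ μ.coeff.support.card = 9) ∧
    (∀ t : ℝ, 0 ≤ (ξ * tCharge ξ).coeff t) ∧
    ¬ ∃ η : MonoidAlgebra ℝ ℝ, (∀ t : ℝ, 0 ≤ η.coeff t) ∧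
      (∀ t ∈ η.coeff.support, (0 : ℝ) < t) ∧ η * η = μ := by
  classical
  have hlpos : (0:ℝ) < l := lt_trans one_pos hl
  have hx' : x * (1 + l ^ 2) ≤ l := by
    rw [le_div_iff₀ (by positivity)] at hxl
    exact hxl
  have hmono : StrictMono fun k : ℕ => l ^ k := fun a b h => pow_lt_pow_right₀ hl h
  have hpinj : ∀ i j : ℕ, l ^ i = l ^ j ↔ i = j := fun i j => hmono.injective.eq_iff
  have hξ1 : ξ = MonoidAlgebra.single (l ^ 1) 1 + MonoidAlgebra.single (l ^ 2) 1 +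
      MonoidAlgebra.single (l ^ 3) (-x) + MonoidAlgebra.single (l ^ 4) 1 +
      MonoidAlgebra.single (l ^ 5) 1 := by rw [hξ, pow_one]
  -- explicit form of μ
  have hμ' : μ = single (l ^ 2) 1 + single (l ^ 3) (1 + 1)
      + single (l ^ 4) (1 + -x + -x) + single (l ^ 5) (1 + 1 + -x + -x)
      + single (l ^ 6) (1 + 1 + 1 + 1 + x * x) + single (l ^ 7) (1 + 1 + -x + -x)
      + single (l ^ 8) (1 + -x + -x) + single (l ^ 9) (1 + 1)
      + single (l ^ 10) 1 := by
    rw [hμ, hξ1]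
    simp only [add_mul, mul_add, MonoidAlgebra.single_mul_single, ← pow_add,
      Nat.reduceAdd, one_mul, mul_one, neg_mul, mul_neg, neg_neg,
      MonoidAlgebra.single_add]
    abel
  -- explicit form of tCharge ξ
  have htξ : tCharge ξ = single (l ^ 1) l + single (l ^ 2) (l ^ 2)
      + single (l ^ 3) (-(x * l ^ 3)) + single (l ^ 4) (l ^ 4)
      + single (l ^ 5) (l ^ 5) := by
    have hz : ∀ a : ℝ, MonoidAlgebra.single a (a * (0:ℝ)) = 0 := by
      intro a; rw [mul_zero, MonoidAlgebra.single_zero]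
    have hadd : ∀ (a : ℝ) (b₁ b₂ : ℝ), MonoidAlgebra.single a (a * (b₁ + b₂)) =
        MonoidAlgebra.single a (a * b₁) + MonoidAlgebra.single a (a * b₂) := by
      intro a b₁ b₂; rw [mul_add, MonoidAlgebra.single_add]
    rw [tCharge, hξ]
    simp only [MonoidAlgebra.coeff_add, MonoidAlgebra.coeff_single]
    rw [Finsupp.sum_add_index' hz hadd, Finsupp.sum_add_index' hz hadd,
      Finsupp.sum_add_index' hz hadd, Finsupp.sum_add_index' hz hadd,
      Finsupp.sum_single_index (hz _), Finsupp.sum_single_index (hz _),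
      Finsupp.sum_single_index (hz _), Finsupp.sum_single_index (hz _),
      Finsupp.sum_single_index (hz _)]
    rw [mul_one, mul_one, mul_one, mul_one, pow_one]
    ring_nf
  -- explicit form of ξ * tCharge ξ
  have hb' : ξ * tCharge ξ = single (l ^ 2) (l * 1)
      + single (l ^ 3) (l ^ 2 + l)
      + single (l ^ 4) (-(x * l ^ 3) + l ^ 2 + -(x * l))
      + single (l ^ 5) (l ^ 4 + -(x * l ^ 3) + -(x * l ^ 2) + l)
      + single (l ^ 6) (l ^ 5 + l ^ 4 + x * (x * l ^ 3) + l ^ 2 + l)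
      + single (l ^ 7) (l ^ 5 + -(x * l ^ 4) + -(x * l ^ 3) + l ^ 2)
      + single (l ^ 8) (-(x * l ^ 5) + l ^ 4 + -(x * l ^ 3))
      + single (l ^ 9) (l ^ 5 + l ^ 4)
      + single (l ^ 10) (l ^ 5) := by
    rw [htξ, hξ1]
    simp only [add_mul, mul_add, MonoidAlgebra.single_mul_single, ← pow_add,
      Nat.reduceAdd, one_mul, mul_one, neg_mul, mul_neg, neg_neg,
      MonoidAlgebra.single_add]
    abel
  -- the support
  have hS : μ.coeff.support = ({l ^ 2, l ^ 3, l ^ 4, l ^ 5, l ^ 6, l ^ 7, l ^ 8, l ^ 9,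
      l ^ 10} : Finset ℝ) := by
    apply Finset.Subset.antisymm
    · intro t ht
      by_contra hts
      simp only [Finset.mem_insert, Finset.mem_singleton, not_or] at hts
      obtain ⟨n2, n3, n4, n5, n6, n7, n8, n9, n10⟩ := hts
      have : μ.coeff t = 0 := by
        rw [hμ']
        simp only [ma_add_apply, MonoidAlgebra.coeff_single_apply]
        rw [if_neg (fun h => n2 h.symm), if_neg (fun h => n3 h.symm),
          if_neg (fun h => n4 h.symm), if_neg (fun h => n5 h.symm),
          if_neg (fun h => n6 h.symm), if_neg (fun h => n7 h.symm),
          if_neg (fun h => n8 h.symm), if_neg (fun h => n9 h.symm),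
          if_neg (fun h => n10 h.symm)]
        ring
      exact absurd this (Finsupp.mem_support_iff.mp ht)
    · intro t ht
      simp only [Finset.mem_insert, Finset.mem_singleton] at ht
      rw [Finsupp.mem_support_iff]
      rcases ht with rfl|rfl|rfl|rfl|rfl|rfl|rfl|rfl|rfl <;>
        (rw [hμ']; simp [ma_add_apply, MonoidAlgebra.coeff_single_apply, hpinj]) <;>
        (intro hc; nlinarith)
  refine ⟨⟨?_, ?_⟩, ?_, ?_⟩
  · -- positivity of μ
    intro t
    rw [hμ']
    simp only [ma_add_apply]
    repeat' apply add_nonneg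
    all_goals apply ma_single_nonneg_apply
    all_goals nlinarith
  · -- 9 atoms
    rw [hS]
    rw [Finset.card_insert_of_notMem (by simp [hpinj]),
      Finset.card_insert_of_notMem (by simp [hpinj]),
      Finset.card_insert_of_notMem (by simp [hpinj]),
      Finset.card_insert_of_notMem (by simp [hpinj]),
      Finset.card_insert_of_notMem (by simp [hpinj]),
      Finset.card_insert_of_notMem (by simp [hpinj]),
      Finset.card_insert_of_notMem (by simp [hpinj]),
      Finset.card_insert_of_notMem (by simp [hpinj]),
      Finset.card_singleton]
  · -- positivity of ξ * tCharge ξ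
    intro t
    have m1 : l * (x * (1 + l ^ 2)) ≤ l * l := mul_le_mul_of_nonneg_left hx' hlpos.le
    have m2 : l ^ 2 * (x * (1 + l ^ 2)) ≤ l ^ 2 * l :=
      mul_le_mul_of_nonneg_left hx' (by positivity)
    have m3 : l ^ 3 * (x * (1 + l ^ 2)) ≤ l ^ 3 * l :=
      mul_le_mul_of_nonneg_left hx' (by positivity)
    have hl2 : (0:ℝ) ≤ l ^ 2 - 1 := by nlinarith
    have hl53 : (0:ℝ) ≤ l ^ 3 * (l ^ 2 - 1) := mul_nonneg (by positivity) hl2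
    have b2 : (0:ℝ) ≤ l * 1 := by nlinarith
    have b3 : (0:ℝ) ≤ l ^ 2 + l := by nlinarith
    have b4 : (0:ℝ) ≤ -(x * l ^ 3) + l ^ 2 + -(x * l) := by nlinarith [m1]
    have b5 : (0:ℝ) ≤ l ^ 4 + -(x * l ^ 3) + -(x * l ^ 2) + l := by
      nlinarith [m1, sq_nonneg l, sq_nonneg (l ^ 2 - 1)]
    have b6 : (0:ℝ) ≤ l ^ 5 + l ^ 4 + x * (x * l ^ 3) + l ^ 2 + l := by
      nlinarith [pow_pos hlpos 5, pow_pos hlpos 4, pow_pos hlpos 2,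
        mul_nonneg (mul_nonneg hx0.le hx0.le) (pow_pos hlpos 3).le]
    have b7 : (0:ℝ) ≤ l ^ 5 + -(x * l ^ 4) + -(x * l ^ 3) + l ^ 2 := by
      nlinarith [m1, m2, hl53]
    have b8 : (0:ℝ) ≤ -(x * l ^ 5) + l ^ 4 + -(x * l ^ 3) := by nlinarith [m3]
    have b9 : (0:ℝ) ≤ l ^ 5 + l ^ 4 := by positivity
    have b10 : (0:ℝ) ≤ l ^ 5 := by positivity
    rw [hb']
    simp only [ma_add_apply]
    repeat' apply add_nonneg
    all_goals apply ma_single_nonneg_apply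
    all_goals assumption
  · -- no positive square root
    rintro ⟨η, hηnn, hηpos, hηsq⟩
    have hξpos : ∀ s ∈ ξ.coeff.support, (0:ℝ) < s := by
      intro s hs
      by_contra hle
      push_neg at hle
      have hne : ∀ k : ℕ, l ^ k ≠ s := fun k h =>
        absurd (h ▸ pow_pos hlpos k) (not_lt.mpr hle)
      have : ξ.coeff s = 0 := by
        rw [hξ1]
        simp only [ma_add_apply, MonoidAlgebra.coeff_single_apply]
        rw [if_neg (hne 1), if_neg (hne 2), if_neg (hne 3), if_neg (hne 4),
          if_neg (hne 5)]
        ring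
      exact absurd this (Finsupp.mem_support_iff.mp hs)
    have hηz : ∀ s : ℝ, s ≤ 0 → η.coeff s = 0 := by
      intro s hle
      by_contra h'
      exact absurd (hηpos s (Finsupp.mem_support_iff.mpr h')) (not_lt.mpr hle)
    have hξz : ∀ s : ℝ, s ≤ 0 → ξ.coeff s = 0 := by
      intro s hle
      by_contra h'
      exact absurd (hξpos s (Finsupp.mem_support_iff.mpr h')) (not_lt.mpr hle)
    have hprod : (η - ξ) * (η + ξ) = 0 := by
      have h0 : η * η = ξ * ξ := hηsq.trans hμ
      linear_combination h0
    have hsubpos : ∀ s ∈ (η - ξ).coeff.support, (0:ℝ) < s := by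
      intro s hs
      by_contra hle
      push_neg at hle
      have : (η - ξ).coeff s = 0 := by rw [ma_sub_apply, hηz s hle, hξz s hle, sub_zero]
      exact absurd this (Finsupp.mem_support_iff.mp hs)
    have haddpos : ∀ s ∈ (η + ξ).coeff.support, (0:ℝ) < s := by
      intro s hs
      by_contra hle
      push_neg at hle
      have : (η + ξ).coeff s = 0 := by rw [ma_add_apply, hηz s hle, hξz s hle, add_zero]
      exact absurd this (Finsupp.mem_support_iff.mp hs)
    have hξl3 : ξ.coeff (l ^ 3) = -x := by
      rw [hξ1]
      simp only [ma_add_apply, MonoidAlgebra.coeff_single_apply, hpinj]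
      norm_num
    have hξl1 : ξ.coeff (l ^ 1) = 1 := by
      rw [hξ1]
      simp only [ma_add_apply, MonoidAlgebra.coeff_single_apply, hpinj]
      norm_num
    rcases eq_or_ne (η - ξ) 0 with h | h
    · have hηξ : η = ξ := sub_eq_zero.mp h
      have := hηnn (l ^ 3)
      rw [hηξ, hξl3] at this
      linarith
    · have h2 : η + ξ = 0 := by
        by_contra h2
        exact ma_no_zero_div _ _ hsubpos haddpos h h2 hprod
      have hηξ : η = -ξ := by linear_combination h2
      have := hηnn (l ^ 1)
      rw [hηξ] at this
      rw [MonoidAlgebra.coeff_neg, Finsupp.neg_apply] at this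
      rw [hξl1] at this
      linarith
end

section
/- With λ = 2 and x = 1/5, the measure μ = δ₄ + 2δ₈ + (3/5)δ₁₆ + (8/5)δ₃₂ + (101/25)δ₆₄ + (8/5)δ₁₂₈ + (3/5)δ₂₅₆ + 2δ₅₁₂ + δ₁₀₂₄ is a positive 9-atomic measure such that μ*(tμ) admits a positive finitely atomic square root (namely ξ*(tξ) with ξ = δ₂ + δ₄ - (1/5)δ₈ + δ₁₆ + δ₃₂), but μ itself admits no positive finitely atomic square root under multiplicative convolution. -/
open MeasureTheory MonoidAlgebra Finset

/-! ### Auxiliary definitions -/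

noncomputable def muE : MonoidAlgebra ℝ ℝ :=
  single (4 : ℝ) 1 + single 8 2 + single 16 (3 / 5) + single 32 (8 / 5) +
    single 64 (101 / 25) + single 128 (8 / 5) + single 256 (3 / 5) + single 512 2 +
    single 1024 1

noncomputable def xiE : MonoidAlgebra ℝ ℝ :=
  single (2 : ℝ) 1 + single 4 1 + single 8 (-(1 / 5)) + single 16 1 + single 32 1

noncomputable def prodE : MonoidAlgebra ℝ ℝ :=
  single (4:ℝ) 2 + single 8 6 + single 16 2 + single 32 (78/5) + single 64 (1358/25)
    + single 128 (156/5) + single 256 8 + single 512 48 + single 1024 32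

noncomputable def cE : MonoidAlgebra ℝ ℝ := algebraMap ℝ (MonoidAlgebra ℝ ℝ) (1/5)
noncomputable def uE : MonoidAlgebra ℝ ℝ := single 2 1

/-! ### tCharge lemmas -/

lemma tCharge_zero : tCharge 0 = 0 := by simp [tCharge]

lemma tCharge_single (a b : ℝ) : tCharge (single a b) = single a (a * b) := by
  unfold tCharge; rw [MonoidAlgebra.sum_single_index]; simp

lemma tCharge_add (f g : MonoidAlgebra ℝ ℝ) : tCharge (f + g) = tCharge f + tCharge g := by
  unfold tCharge
  rw [MonoidAlgebra.coeff_add]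
  apply Finsupp.sum_add_index
  · intro a _; simp
  · intro a _ b c; rw [mul_add]; exact MonoidAlgebra.single_add _ _ _

lemma tCharge_single_mul (a b : ℝ) (g : MonoidAlgebra ℝ ℝ) :
    tCharge (single a b * g) = tCharge (single a b) * tCharge g := by
  induction g using MonoidAlgebra.induction with
  | zero => simp [tCharge_zero]
  | single_add c d g _ _ ihg =>
    rw [mul_add, tCharge_add, tCharge_add, mul_add, ihg]
    congr 1
    rw [MonoidAlgebra.single_mul_single, tCharge_single, tCharge_single, tCharge_single,
      MonoidAlgebra.single_mul_single]
    ring_nf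

lemma tCharge_mul (f g : MonoidAlgebra ℝ ℝ) : tCharge (f * g) = tCharge f * tCharge g := by
  induction f using MonoidAlgebra.induction with
  | zero => simp [tCharge_zero]
  | single_add a b f _ _ ih =>
    rw [add_mul, tCharge_add, tCharge_add, add_mul, ih, tCharge_single_mul]

/-! ### The u-c algebraic representation -/

lemma alg_single (r : ℝ) : algebraMap ℝ (MonoidAlgebra ℝ ℝ) r = single 1 r := by
  rw [MonoidAlgebra.coe_algebraMap]; simp

lemma single_eq_pow (k : ℕ) (r : ℝ) : (single ((2:ℝ)^k) r : MonoidAlgebra ℝ ℝ)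
    = algebraMap ℝ (MonoidAlgebra ℝ ℝ) r * (single (2:ℝ) (1:ℝ))^k := by
  rw [alg_single, MonoidAlgebra.single_pow, one_pow, MonoidAlgebra.single_mul_single,
    one_mul, mul_one]

lemma hc5 : (5 : MonoidAlgebra ℝ ℝ) * cE = 1 := by
  calc (5 : MonoidAlgebra ℝ ℝ) * cE
      = algebraMap ℝ (MonoidAlgebra ℝ ℝ) 5 * algebraMap ℝ (MonoidAlgebra ℝ ℝ) (1/5) := by
        rw [map_ofNat]; rfl
    _ = algebraMap ℝ (MonoidAlgebra ℝ ℝ) (5 * (1/5)) := (map_mul _ _ _).symm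
    _ = 1 := by rw [show (5:ℝ) * (1/5:ℝ) = 1 by norm_num, map_one]

lemma single_pow_eq (a : ℝ) (k : ℕ) (r : ℝ) (h : a = 2^k)
    (x : MonoidAlgebra ℝ ℝ) (hx : algebraMap ℝ (MonoidAlgebra ℝ ℝ) r = x) :
    (single a r : MonoidAlgebra ℝ ℝ) = x * uE^k := by
  rw [h, single_eq_pow, hx]; rfl

lemma hxiE : xiE = uE + uE^2 + (-(cE * uE^3)) + uE^4 + uE^5 := by
  rw [xiE,
    single_pow_eq 4 2 1 (by norm_num) 1 (map_one _),
    single_pow_eq 8 3 (-(1/5)) (by norm_num) (-cE) (by rw [map_neg]; rfl),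
    single_pow_eq 16 4 1 (by norm_num) 1 (map_one _),
    single_pow_eq 32 5 1 (by norm_num) 1 (map_one _),
    single_pow_eq 2 1 1 (by norm_num) 1 (map_one _)]
  ring

lemma hmuE : muE = uE^2 + 2*uE^3 + 3*cE*uE^4 + 8*cE*uE^5 + 101*cE*cE*uE^6 + 8*cE*uE^7
    + 3*cE*uE^8 + 2*uE^9 + uE^10 := by
  have c3 : algebraMap ℝ (MonoidAlgebra ℝ ℝ) (3/5) = 3 * cE := by
    rw [show (3/5:ℝ) = 3 * (1/5) by norm_num, map_mul, map_ofNat]; rfl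
  have c8 : algebraMap ℝ (MonoidAlgebra ℝ ℝ) (8/5) = 8 * cE := by
    rw [show (8/5:ℝ) = 8 * (1/5) by norm_num, map_mul, map_ofNat]; rfl
  have c101 : algebraMap ℝ (MonoidAlgebra ℝ ℝ) (101/25) = 101 * (cE * cE) := by
    rw [show (101/25:ℝ) = 101 * ((1/5) * (1/5)) by norm_num, map_mul, map_mul, map_ofNat]; rfl
  rw [muE,
    single_pow_eq 4 2 1 (by norm_num) 1 (map_one _),
    single_pow_eq 8 3 2 (by norm_num) 2 (map_ofNat _ 2),
    single_pow_eq 16 4 (3/5) (by norm_num) (3*cE) c3,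
    single_pow_eq 32 5 (8/5) (by norm_num) (8*cE) c8,
    single_pow_eq 64 6 (101/25) (by norm_num) (101*(cE*cE)) c101,
    single_pow_eq 128 7 (8/5) (by norm_num) (8*cE) c8,
    single_pow_eq 256 8 (3/5) (by norm_num) (3*cE) c3,
    single_pow_eq 512 9 2 (by norm_num) 2 (map_ofNat _ 2),
    single_pow_eq 1024 10 1 (by norm_num) 1 (map_one _)]
  ring

lemma txiE_eq : tCharge xiE = 2*uE + 4*uE^2 - 8*cE*uE^3 + 16*uE^4 + 32*uE^5 := by
  rw [xiE, tCharge_add, tCharge_add, tCharge_add, tCharge_add,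
    tCharge_single, tCharge_single, tCharge_single, tCharge_single, tCharge_single]
  rw [single_pow_eq 2 1 (2*1) (by norm_num) 2 (by rw [show (2*1:ℝ) = 2 by norm_num, map_ofNat]),
    single_pow_eq 4 2 (4*1) (by norm_num) 4 (by rw [show (4*1:ℝ) = 4 by norm_num, map_ofNat]),
    single_pow_eq 8 3 (8*(-(1/5))) (by norm_num) (-(8*cE)) (by
      rw [show (8*(-(1/5)) : ℝ) = -(8 * (1/5)) by norm_num, map_neg, map_mul, map_ofNat]; rfl),
    single_pow_eq 16 4 (16*1) (by norm_num) 16 (by rw [show (16*1:ℝ) = 16 by norm_num, map_ofNat]),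
    single_pow_eq 32 5 (32*1) (by norm_num) 32 (by rw [show (32*1:ℝ) = 32 by norm_num, map_ofNat])]
  ring

lemma hprodE : prodE = 2*uE^2 + 6*uE^3 + 2*uE^4 + 78*cE*uE^5 + 1358*(cE*cE)*uE^6
    + 156*cE*uE^7 + 8*uE^8 + 48*uE^9 + 32*uE^10 := by
  have c78 : algebraMap ℝ (MonoidAlgebra ℝ ℝ) (78/5) = 78 * cE := by
    rw [show (78/5:ℝ) = 78 * (1/5) by norm_num, map_mul, map_ofNat]; rfl
  have c156 : algebraMap ℝ (MonoidAlgebra ℝ ℝ) (156/5) = 156 * cE := by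
    rw [show (156/5:ℝ) = 156 * (1/5) by norm_num, map_mul, map_ofNat]; rfl
  have c1358 : algebraMap ℝ (MonoidAlgebra ℝ ℝ) (1358/25) = 1358 * (cE * cE) := by
    rw [show (1358/25:ℝ) = 1358 * ((1/5) * (1/5)) by norm_num, map_mul, map_mul, map_ofNat]; rfl
  rw [prodE,
    single_pow_eq 4 2 2 (by norm_num) 2 (map_ofNat _ 2),
    single_pow_eq 8 3 6 (by norm_num) 6 (map_ofNat _ 6),
    single_pow_eq 16 4 2 (by norm_num) 2 (map_ofNat _ 2),
    single_pow_eq 32 5 (78/5) (by norm_num) (78*cE) c78,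
    single_pow_eq 64 6 (1358/25) (by norm_num) (1358*(cE*cE)) c1358,
    single_pow_eq 128 7 (156/5) (by norm_num) (156*cE) c156,
    single_pow_eq 256 8 8 (by norm_num) 8 (map_ofNat _ 8),
    single_pow_eq 512 9 48 (by norm_num) 48 (map_ofNat _ 48),
    single_pow_eq 1024 10 32 (by norm_num) 32 (map_ofNat _ 32)]

set_option maxHeartbeats 1000000 in
lemma xi_sq : xiE * xiE = muE := by
  rw [hxiE, hmuE]
  linear_combination (-(uE^4 + 2*uE^5 + 4*(5*cE+1)*uE^6 + 2*uE^7 + uE^8)) * hc5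

set_option maxHeartbeats 1000000 in
lemma xi_prod : xiE * tCharge xiE = prodE := by
  rw [txiE_eq, hxiE, hprodE]
  linear_combination (-(2*uE^4 + 18*uE^5 + 54*(5*cE+1)*uE^6 + 36*uE^7 + 8*uE^8)) * hc5

/-! ### Pointwise lemmas about muE.coeff and prodE -/

lemma MA_add_apply (f g : MonoidAlgebra ℝ ℝ) (p : ℝ) : (f + g).coeff p = f.coeff p + g.coeff p := rfl

lemma single_app_nonneg {a b t : ℝ} (hb : 0 ≤ b) : 0 ≤ (single a b : MonoidAlgebra ℝ ℝ).coeff t := by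
  rw [MonoidAlgebra.coeff_single_apply]
  split
  · exact hb
  · exact le_refl 0

lemma muE_nonneg (t : ℝ) : 0 ≤ muE.coeff t := by
  rw [muE]
  simp only [MA_add_apply]
  repeat' apply add_nonneg
  all_goals { apply single_app_nonneg; norm_num }

lemma prodE_nonneg (t : ℝ) : 0 ≤ prodE.coeff t := by
  rw [prodE]
  simp only [MA_add_apply]
  repeat' apply add_nonneg
  all_goals { apply single_app_nonneg; norm_num }

lemma muE_apply (p : ℝ) : muE.coeff p =
    (if (4:ℝ) = p then (1:ℝ) else 0) + (if (8:ℝ) = p then (2:ℝ) else 0) +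
    (if (16:ℝ) = p then (3/5:ℝ) else 0) + (if (32:ℝ) = p then (8/5:ℝ) else 0) +
    (if (64:ℝ) = p then (101/25:ℝ) else 0) + (if (128:ℝ) = p then (8/5:ℝ) else 0) +
    (if (256:ℝ) = p then (3/5:ℝ) else 0) + (if (512:ℝ) = p then (2:ℝ) else 0) +
    (if (1024:ℝ) = p then (1:ℝ) else 0) := by
  rw [muE]
  simp only [MA_add_apply, MonoidAlgebra.coeff_single_apply]

lemma muE_zero {p : ℝ} (h4 : p ≠ 4) (h8 : p ≠ 8) (h16 : p ≠ 16) (h32 : p ≠ 32)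
    (h64 : p ≠ 64) (h128 : p ≠ 128) (h256 : p ≠ 256) (h512 : p ≠ 512)
    (h1024 : p ≠ 1024) : muE.coeff p = 0 := by
  rw [muE_apply, if_neg (fun h => h4 h.symm), if_neg (fun h => h8 h.symm),
    if_neg (fun h => h16 h.symm), if_neg (fun h => h32 h.symm),
    if_neg (fun h => h64 h.symm), if_neg (fun h => h128 h.symm),
    if_neg (fun h => h256 h.symm), if_neg (fun h => h512 h.symm),
    if_neg (fun h => h1024 h.symm)]
  norm_num

lemma muE_4 : muE.coeff 4 = 1 := by rw [muE_apply]; norm_num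
lemma muE_8 : muE.coeff 8 = 2 := by rw [muE_apply]; norm_num
lemma muE_16 : muE.coeff 16 = 3/5 := by rw [muE_apply]; norm_num

lemma support_step (f : MonoidAlgebra ℝ ℝ) (s : Finset ℝ) (a b : ℝ) (hb : b ≠ 0)
    (hf : f.coeff.support = s) (ha : a ∉ s) : (f + single a b).coeff.support = insert a s := by
  have hd : Disjoint f.coeff.support (single a b : MonoidAlgebra ℝ ℝ).coeff.support := by
    rw [hf, MonoidAlgebra.coeff_single, Finsupp.support_single_ne_zero a hb]
    simp only [Finset.disjoint_singleton_right]
    exact ha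
  rw [MonoidAlgebra.coeff_add, Finsupp.support_add_eq hd, hf, MonoidAlgebra.coeff_single,
    Finsupp.support_single_ne_zero a hb,
    Finset.union_comm]
  ext x; simp [Finset.mem_insert, or_comm]

lemma muE_card : muE.coeff.support.card = 9 := by
  have h0 : (single (4:ℝ) (1:ℝ) : MonoidAlgebra ℝ ℝ).coeff.support = {4} :=
    Finsupp.support_single_ne_zero _ (by norm_num)
  have h1 := support_step _ _ 8 2 (by norm_num) h0 (by norm_num)
  have h2 := support_step _ _ 16 (3/5) (by norm_num) h1 (by norm_num)
  have h3 := support_step _ _ 32 (8/5) (by norm_num) h2 (by norm_num)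
  have h4 := support_step _ _ 64 (101/25) (by norm_num) h3 (by norm_num)
  have h5 := support_step _ _ 128 (8/5) (by norm_num) h4 (by norm_num)
  have h6 := support_step _ _ 256 (3/5) (by norm_num) h5 (by norm_num)
  have h7 := support_step _ _ 512 2 (by norm_num) h6 (by norm_num)
  have h8 := support_step _ _ 1024 1 (by norm_num) h7 (by norm_num)
  rw [muE, h8]
  rw [Finset.card_insert_of_notMem (by norm_num), Finset.card_insert_of_notMem (by norm_num),
    Finset.card_insert_of_notMem (by norm_num), Finset.card_insert_of_notMem (by norm_num),
    Finset.card_insert_of_notMem (by norm_num), Finset.card_insert_of_notMem (by norm_num),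
    Finset.card_insert_of_notMem (by norm_num), Finset.card_insert_of_notMem (by norm_num),
    Finset.card_singleton]

lemma conv_apply (η : MonoidAlgebra ℝ ℝ) (hps : ∀ x ∈ η.coeff.support, x ≠ 0) (p : ℝ) :
    (η * η).coeff p = ∑ x ∈ η.coeff.support, η.coeff x * η.coeff (p / x) := by
  rw [MonoidAlgebra.coeff_mul, Finsupp.sum]
  apply Finset.sum_congr rfl
  intro x hx
  rw [Finsupp.sum]
  have hx0 : x ≠ 0 := hps x hx
  have hcond : ∀ y : ℝ, (x * y = p) ↔ (y = p / x) := by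
    intro y
    rw [eq_div_iff hx0]
    constructor <;> intro h <;> linarith [mul_comm x y]
  calc (∑ y ∈ η.coeff.support, if x * y = p then η.coeff x * η.coeff y else 0)
      = ∑ y ∈ η.coeff.support, if y = p / x then η.coeff x * η.coeff y else 0 := by
        apply Finset.sum_congr rfl; intro y _
        by_cases h : x * y = p
        · rw [if_pos h, if_pos ((hcond y).mp h)]
        · rw [if_neg h, if_neg (fun h' => h ((hcond y).mpr h'))]
    _ = if p / x ∈ η.coeff.support then η.coeff x * η.coeff (p / x) else 0 :=
        Finset.sum_ite_eq' η.coeff.support (p / x) (fun y => η.coeff x * η.coeff y)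
    _ = η.coeff x * η.coeff (p / x) := by
        by_cases h : p / x ∈ η.coeff.support
        · rw [if_pos h]
        · rw [if_neg h, Finsupp.notMem_support_iff.mp h, mul_zero]

lemma conv_ge (η : MonoidAlgebra ℝ ℝ) (hpos : ∀ t : ℝ, 0 ≤ η.coeff t) (a b : ℝ) :
    η.coeff a * η.coeff b ≤ (η * η).coeff (a * b) := by
  rw [MonoidAlgebra.coeff_mul, Finsupp.sum]
  have hterm : ∀ x y : ℝ, (0:ℝ) ≤ if x * y = a * b then η.coeff x * η.coeff y else 0 := by
    intro x y; split
    · exact mul_nonneg (hpos x) (hpos y)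
    · exact le_refl 0
  have hinner : ∀ x : ℝ, (0:ℝ) ≤ Finsupp.sum η.coeff fun y c => if x * y = a * b then η.coeff x * c else 0 := by
    intro x; rw [Finsupp.sum]
    apply Finset.sum_nonneg
    intro y _; exact hterm x y
  by_cases ha : a ∈ η.coeff.support
  · by_cases hb : b ∈ η.coeff.support
    · calc η.coeff a * η.coeff b = (if a * b = a * b then η.coeff a * η.coeff b else 0) := by rw [if_pos rfl]
        _ ≤ ∑ y ∈ η.coeff.support, if a * y = a * b then η.coeff a * η.coeff y else 0 := by
            apply Finset.single_le_sum (f := fun y => if a * y = a * b then η.coeff a * η.coeff y else 0)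
              (fun y _ => hterm a y) hb
        _ ≤ _ := by
            apply Finset.single_le_sum (f := fun x =>
              Finsupp.sum η.coeff fun y c => if x * y = a * b then η.coeff x * c else 0) _ ha
            intro x _; exact hinner x
    · rw [Finsupp.notMem_support_iff.mp hb, mul_zero]
      exact Finset.sum_nonneg (fun x _ => hinner x)
  · rw [Finsupp.notMem_support_iff.mp ha, zero_mul]
    exact Finset.sum_nonneg (fun x _ => hinner x)

noncomputable def negMap (η : MonoidAlgebra ℝ ℝ) : MonoidAlgebra ℝ ℝ :=
  MonoidAlgebra.ofCoeff (Finsupp.mapDomain (fun x : ℝ => -x) η.coeff)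

lemma negMap_apply (η : MonoidAlgebra ℝ ℝ) (t : ℝ) : (negMap η).coeff t = η.coeff (-t) := by
  have h : (fun x : ℝ => -x) = ⇑(Equiv.neg ℝ) := rfl
  rw [negMap, MonoidAlgebra.coeff_ofCoeff, h, Finsupp.mapDomain_equiv_apply]
  rfl

lemma neg_map_sq (η : MonoidAlgebra ℝ ℝ) : negMap η * negMap η = η * η := by
  rw [MonoidAlgebra.mul_def, MonoidAlgebra.mul_def, negMap, MonoidAlgebra.coeff_ofCoeff]
  rw [Finsupp.sum_mapDomain_index (by intro b; simp) (by
    intro b m₁ m₂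
    rw [← Finsupp.sum_add]
    apply Finsupp.sum_congr
    intro c _
    rw [add_mul]
    exact MonoidAlgebra.single_add _ _ _)]
  apply Finsupp.sum_congr
  intro a _
  rw [Finsupp.sum_mapDomain_index (by intro b; simp) (by
    intro b m₁ m₂; rw [mul_add]; exact MonoidAlgebra.single_add _ _ _)]
  apply Finsupp.sum_congr
  intro c _
  rw [neg_mul_neg]
lemma noRoot (η : MonoidAlgebra ℝ ℝ) (hpos : ∀ t : ℝ, 0 ≤ η.coeff t)
    (hps : ∀ x ∈ η.coeff.support, 0 < x) (hsq : η * η = muE) : False := by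
  have happ : ∀ p : ℝ, (η * η).coeff p = muE.coeff p := fun p => by rw [hsq]
  have hconv : ∀ p : ℝ, (η * η).coeff p = ∑ x ∈ η.coeff.support, η.coeff x * η.coeff (p / x) :=
    conv_apply η (fun x hx => ne_of_gt (hps x hx))
  have hsp : ∀ x ∈ η.coeff.support, 0 < η.coeff x :=
    fun x hx => lt_of_le_of_ne (hpos x) (Ne.symm (Finsupp.mem_support_iff.mp hx))
  have hsv : ∀ p : ℝ, (∑ x ∈ η.coeff.support, η.coeff x * η.coeff (p / x)) = muE.coeff p :=
    fun p => (hconv p).symm.trans (happ p)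
  have hne : η.coeff.support.Nonempty := by
    rw [Finset.nonempty_iff_ne_empty]
    intro h
    have h4 := hsv 4
    rw [h, Finset.sum_empty, muE_4] at h4
    norm_num at h4
  set m := η.coeff.support.min' hne with hmdef
  have hmS : m ∈ η.coeff.support := Finset.min'_mem _ _
  have hm0 : 0 < m := hps m hmS
  have hmle : ∀ x ∈ η.coeff.support, m ≤ x := fun x hx => Finset.min'_le _ _ hx
  have hηm : 0 < η.coeff m := hsp m hmS
  have h4v : (∑ x ∈ η.coeff.support, η.coeff x * η.coeff (4 / x)) = 1 := by rw [hsv, muE_4]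
  have hm2 : m ≤ 2 := by
    obtain ⟨x, hx, hne0⟩ := Finset.exists_ne_zero_of_sum_ne_zero
      (s := η.coeff.support) (f := fun x => η.coeff x * η.coeff (4 / x)) (by rw [h4v]; norm_num)
    have hx0 : 0 < x := hps x hx
    have hy : (4 / x) ∈ η.coeff.support := Finsupp.mem_support_iff.mpr (by
      intro h; rw [h, mul_zero] at hne0; exact hne0 rfl)
    have h1 : m ≤ x := hmle x hx
    have h2 : m ≤ 4 / x := hmle _ hy
    have h3 : x * (4 / x) = 4 := by field_simp
    nlinarith
  have hmm_pos : 0 < (η * η).coeff (m * m) := by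
    rw [hconv]
    apply Finset.sum_pos' (fun x _ => mul_nonneg (hpos x) (hpos _))
    refine ⟨m, hmS, ?_⟩
    rw [mul_div_assoc, div_self (ne_of_gt hm0), mul_one]
    exact mul_pos hηm hηm
  have hmm4 : m * m = 4 := by
    by_contra hne4
    have hlt : m * m < 4 := lt_of_le_of_ne (by nlinarith) hne4
    have h0' : muE.coeff (m * m) = 0 := muE_zero (ne_of_lt hlt) (by nlinarith) (by nlinarith)
      (by nlinarith) (by nlinarith) (by nlinarith) (by nlinarith) (by nlinarith) (by nlinarith)
    rw [happ, h0'] at hmm_pos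
    exact lt_irrefl 0 hmm_pos
  have hm2' : m = 2 := by nlinarith
  have h2S : (2:ℝ) ∈ η.coeff.support := hm2' ▸ hmS
  have h2le : ∀ x ∈ η.coeff.support, 2 ≤ x := fun x hx => by
    rw [← hm2']; exact hmle x hx
  have hη2pos : 0 < η.coeff 2 := hm2' ▸ hηm
  have hη2 : η.coeff 2 = 1 := by
    have hcalc : (∑ x ∈ η.coeff.support, η.coeff x * η.coeff (4 / x)) = η.coeff 2 * η.coeff 2 := by
      rw [show (∑ x ∈ η.coeff.support, η.coeff x * η.coeff (4 / x))
          = ∑ x ∈ η.coeff.support, (if x = 2 then η.coeff 2 * η.coeff 2 else 0) from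
        Finset.sum_congr rfl ?_]
      · rw [Finset.sum_ite_eq' _ _ _, if_pos h2S]
      · intro x hx
        by_cases hx2 : x = 2
        · rw [if_pos hx2, hx2, show (4:ℝ)/2 = 2 by norm_num]
        · rw [if_neg hx2]
          have hxgt : 2 < x := lt_of_le_of_ne (h2le x hx) (Ne.symm hx2)
          have hx0 : 0 < x := hps x hx
          have hnm : (4 / x) ∉ η.coeff.support := by
            intro hmem
            have h2d := h2le _ hmem
            rw [le_div_iff₀ hx0] at h2d
            linarith
          rw [Finsupp.notMem_support_iff.mp hnm, mul_zero]
    have h1 : η.coeff 2 * η.coeff 2 = 1 := by rw [← hcalc]; exact h4v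
    nlinarith
  have hgap1 : ∀ x ∈ η.coeff.support, x = 2 ∨ 4 ≤ x := by
    intro x hx
    by_cases hx2 : x = 2
    · left; exact hx2
    · right
      by_contra hlt
      push_neg at hlt
      have hxgt : 2 < x := lt_of_le_of_ne (h2le x hx) (Ne.symm hx2)
      have hpp : 0 < (η * η).coeff (2 * x) := by
        rw [hconv]
        apply Finset.sum_pos' (fun y _ => mul_nonneg (hpos y) (hpos _))
        refine ⟨2, h2S, ?_⟩
        rw [show (2 * x) / 2 = x by ring]
        exact mul_pos hη2pos (hsp x hx)
      have h0' : muE.coeff (2 * x) = 0 := muE_zero (by linarith) (by linarith) (by linarith)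
        (by linarith) (by linarith) (by linarith) (by linarith) (by linarith) (by linarith)
      rw [happ, h0'] at hpp
      exact lt_irrefl 0 hpp
  have h8v : (∑ x ∈ η.coeff.support, η.coeff x * η.coeff (8 / x)) = 2 := by rw [hsv, muE_8]
  have h4S : (4:ℝ) ∈ η.coeff.support := by
    obtain ⟨x, hx, hne0⟩ := Finset.exists_ne_zero_of_sum_ne_zero
      (s := η.coeff.support) (f := fun x => η.coeff x * η.coeff (8 / x)) (by rw [h8v]; norm_num)
    have hx0 : 0 < x := hps x hx
    have hy : (8 / x) ∈ η.coeff.support := Finsupp.mem_support_iff.mpr (by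
      intro h; rw [h, mul_zero] at hne0; exact hne0 rfl)
    rcases hgap1 x hx with h | h
    · rw [h] at hy
      norm_num at hy
      exact Finsupp.mem_support_iff.mpr hy
    · have h2y := h2le _ hy
      have hle : 8 / x ≤ 2 := by rw [div_le_iff₀ hx0]; linarith
      have heq : 8 / x = 2 := le_antisymm hle h2y
      have hx4 : x = 4 := by field_simp at heq; linarith
      rw [← hx4]; exact hx
  have hη4 : η.coeff 4 = 1 := by
    have hcalc : (∑ x ∈ η.coeff.support, η.coeff x * η.coeff (8 / x)) = η.coeff 2 * η.coeff 4 + η.coeff 4 * η.coeff 2 := by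
      rw [show (∑ x ∈ η.coeff.support, η.coeff x * η.coeff (8 / x))
          = ∑ x ∈ η.coeff.support, ((if x = 2 then η.coeff 2 * η.coeff 4 else 0)
            + (if x = 4 then η.coeff 4 * η.coeff 2 else 0)) from Finset.sum_congr rfl ?_]
      · rw [Finset.sum_add_distrib, Finset.sum_ite_eq' _ _ _, Finset.sum_ite_eq' _ _ _,
          if_pos h2S, if_pos h4S]
      · intro x hx
        rcases hgap1 x hx with h | h
        · rw [h, if_pos rfl, if_neg (by norm_num), show (8:ℝ)/2 = 4 by norm_num, add_zero]
        · by_cases hx4 : x = 4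
          · rw [hx4, if_neg (by norm_num), if_pos rfl, show (8:ℝ)/4 = 2 by norm_num, zero_add]
          · have hgt : 4 < x := lt_of_le_of_ne h (Ne.symm hx4)
            have hx0 : 0 < x := hps x hx
            have hnm : (8 / x) ∉ η.coeff.support := by
              intro hmem
              have h2d := h2le _ hmem
              rw [le_div_iff₀ hx0] at h2d
              linarith
            rw [Finsupp.notMem_support_iff.mp hnm, mul_zero,
              if_neg (by rintro rfl; linarith), if_neg hx4]
            norm_num
    rw [h8v, hη2] at hcalc
    linarith
  have hgap2 : ∀ x ∈ η.coeff.support, x = 2 ∨ x = 4 ∨ 8 ≤ x := by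
    intro x hx
    rcases hgap1 x hx with h | h
    · left; exact h
    · right
      by_cases hx4 : x = 4
      · left; exact hx4
      · right
        by_contra hlt
        push_neg at hlt
        have hgt : 4 < x := lt_of_le_of_ne h (Ne.symm hx4)
        have hpp : 0 < (η * η).coeff (2 * x) := by
          rw [hconv]
          apply Finset.sum_pos' (fun y _ => mul_nonneg (hpos y) (hpos _))
          refine ⟨2, h2S, ?_⟩
          rw [show (2 * x) / 2 = x by ring]
          exact mul_pos hη2pos (hsp x hx)
        have h0' : muE.coeff (2 * x) = 0 := muE_zero (by linarith) (by linarith) (by linarith)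
          (by linarith) (by linarith) (by linarith) (by linarith) (by linarith) (by linarith)
        rw [happ, h0'] at hpp
        exact lt_irrefl 0 hpp
  have h16v : (∑ x ∈ η.coeff.support, η.coeff x * η.coeff (16 / x)) = 3/5 := by rw [hsv, muE_16]
  have hcalc : (∑ x ∈ η.coeff.support, η.coeff x * η.coeff (16 / x))
      = η.coeff 2 * η.coeff 8 + η.coeff 4 * η.coeff 4 + η.coeff 8 * η.coeff 2 := by
    rw [show (∑ x ∈ η.coeff.support, η.coeff x * η.coeff (16 / x))
        = ∑ x ∈ η.coeff.support, ((if x = 2 then η.coeff 2 * η.coeff 8 else 0)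
          + (if x = 4 then η.coeff 4 * η.coeff 4 else 0)
          + (if x = 8 then η.coeff 8 * η.coeff 2 else 0)) from Finset.sum_congr rfl ?_]
    · rw [Finset.sum_add_distrib, Finset.sum_add_distrib, Finset.sum_ite_eq' _ _ _,
        Finset.sum_ite_eq' _ _ _, Finset.sum_ite_eq' _ _ _, if_pos h2S, if_pos h4S]
      by_cases h8S : (8:ℝ) ∈ η.coeff.support
      · rw [if_pos h8S]
      · rw [if_neg h8S, Finsupp.notMem_support_iff.mp h8S, zero_mul, mul_zero]
    · intro x hx
      rcases hgap2 x hx with h | h | h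
      · rw [h, if_pos rfl, if_neg (by norm_num), if_neg (by norm_num),
          show (16:ℝ)/2 = 8 by norm_num, add_zero, add_zero]
      · rw [h, if_neg (by norm_num), if_pos rfl, if_neg (by norm_num),
          show (16:ℝ)/4 = 4 by norm_num, zero_add, add_zero]
      · by_cases hx8 : x = 8
        · rw [hx8, if_neg (by norm_num), if_neg (by norm_num), if_pos rfl,
            show (16:ℝ)/8 = 2 by norm_num, zero_add, zero_add]
        · have hgt : 8 < x := lt_of_le_of_ne h (Ne.symm hx8)
          have hx0 : 0 < x := hps x hx
          have hnm : (16 / x) ∉ η.coeff.support := by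
            intro hmem
            have h2d := h2le _ hmem
            rw [le_div_iff₀ hx0] at h2d
            linarith
          rw [Finsupp.notMem_support_iff.mp hnm, mul_zero,
            if_neg (by rintro rfl; linarith), if_neg hx8,
            if_neg (by rintro rfl; linarith)]
          norm_num
  rw [h16v, hη2, hη4] at hcalc
  have h8nn := hpos 8
  linarith

lemma muE_zero_of_nonpos {p : ℝ} (hp : p ≤ 0) : muE.coeff p = 0 :=
  muE_zero (by linarith) (by linarith) (by linarith) (by linarith) (by linarith)
    (by linarith) (by linarith) (by linarith) (by linarith)

/-- The concrete 9-atomic counterexample with λ = 2, x = 1/5. -/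
theorem concrete_nine_atomic (μ ξ : MonoidAlgebra ℝ ℝ)
    (hμ : μ = MonoidAlgebra.single (4 : ℝ) 1 + MonoidAlgebra.single 8 2 +
      MonoidAlgebra.single 16 (3 / 5) + MonoidAlgebra.single 32 (8 / 5) +
      MonoidAlgebra.single 64 (101 / 25) + MonoidAlgebra.single 128 (8 / 5) +
      MonoidAlgebra.single 256 (3 / 5) + MonoidAlgebra.single 512 2 +
      MonoidAlgebra.single 1024 1)
    (hξ : ξ = MonoidAlgebra.single (2 : ℝ) 1 + MonoidAlgebra.single 4 1 +
      MonoidAlgebra.single 8 (-(1 / 5)) + MonoidAlgebra.single 16 1 +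
      MonoidAlgebra.single 32 1) :
    (∀ t : ℝ, 0 ≤ μ.coeff t) ∧ μ.coeff.support.card = 9 ∧
    ((∀ t : ℝ, 0 ≤ (ξ * tCharge ξ).coeff t) ∧
      (ξ * tCharge ξ) * (ξ * tCharge ξ) = μ * tCharge μ) ∧
    ¬ ∃ η : MonoidAlgebra ℝ ℝ, (∀ t : ℝ, 0 ≤ η.coeff t) ∧ η * η = μ := by
  have hmu' : μ = muE := by rw [hμ, muE]
  have hxi' : ξ = xiE := by rw [hξ, xiE]
  refine ⟨?_, ?_, ⟨?_, ?_⟩, ?_⟩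
  · intro t; rw [hmu']; exact muE_nonneg t
  · rw [hmu']; exact muE_card
  · intro t; rw [hxi', xi_prod]; exact prodE_nonneg t
  · rw [hxi', hmu', ← xi_sq, tCharge_mul]; ring
  · rintro ⟨η, hp, hsq⟩
    rw [hmu'] at hsq
    have h0 : (0:ℝ) ∉ η.coeff.support := by
      intro h0S
      have hge := conv_ge η hp 0 0
      rw [hsq, show (0:ℝ) * 0 = 0 by norm_num, muE_zero_of_nonpos (le_refl 0)] at hge
      have h0pos : 0 < η.coeff 0 :=
        lt_of_le_of_ne (hp 0) (Ne.symm (Finsupp.mem_support_iff.mp h0S))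
      nlinarith
    have hdich : (∀ x ∈ η.coeff.support, 0 < x) ∨ (∀ x ∈ η.coeff.support, x < 0) := by
      by_cases hall : ∀ x ∈ η.coeff.support, 0 < x
      · left; exact hall
      · right
        push_neg at hall
        obtain ⟨a, haS, hale⟩ := hall
        have ha : a < 0 := lt_of_le_of_ne hale (fun h => h0 (h ▸ haS))
        intro x hxS
        by_contra hxn
        push_neg at hxn
        have hx : 0 < x := lt_of_le_of_ne hxn (fun h => h0 (h ▸ hxS))
        have hge := conv_ge η hp a x
        rw [hsq, muE_zero_of_nonpos (le_of_lt (mul_neg_of_neg_of_pos ha hx))] at hge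
        have hpa : 0 < η.coeff a :=
          lt_of_le_of_ne (hp a) (Ne.symm (Finsupp.mem_support_iff.mp haS))
        have hpx : 0 < η.coeff x :=
          lt_of_le_of_ne (hp x) (Ne.symm (Finsupp.mem_support_iff.mp hxS))
        nlinarith
    rcases hdich with hposS | hnegS
    · exact noRoot η hp hposS hsq
    · refine noRoot (negMap η) (fun t => by rw [negMap_apply]; exact hp _) ?_
        (by rw [neg_map_sq]; exact hsq)
      intro x hx
      have hx' : η.coeff (-x) ≠ 0 := by
        rw [Finsupp.mem_support_iff, negMap_apply] at hx
        exact hx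
      have hmem : -x ∈ η.coeff.support := Finsupp.mem_support_iff.mpr hx'
      have := hnegS _ hmem
      linarith
end
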